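/- arXiv:2602.15719 — 5 statements merged into one kernel-verified Lean document; each statement's English description precedes it below -/
import Mathlib

section
/- Let T : [0,1) → [0,1) be an aperiodic right-continuous interval exchange transformation and let ε > 0. Then there exist M > 1 and points y_1 < ⋯ < y_{M−1} in (0,1) such that, setting y_0 = 0 and y_M = 1: (i) max_{0 ≤ j < M} |y_{j+1} − y_j| ≤ ε; and (ii) for every j ∈ {0, …, M−1}, writing Δ = [y_j, y_{j+1}), every discontinuity of the induced map T_Δ is a T-cut on Δ; furthermore, if y is the discontinuity of T_Δ with lim_{x→y⁻} T_Δ x = y_{j+1} and i = lim_{x→y⁻} h_{Δ,T}(x), then there exists r ∈ {0, …, i−1} such that T^r y is a discontinuity of T. -/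
/-- A right-continuous interval exchange transformation of `[c, d)`. -/
def IsIETOn (T : ℝ → ℝ) (c d : ℝ) : Prop :=
  ∃ (N : ℕ) (p : ℕ → ℝ) (σ : ℕ → ℝ),
    1 ≤ N ∧ p 0 = c ∧ p N = d ∧ (∀ i < N, p i < p (i + 1)) ∧
    (∀ i < N, ∀ x ∈ Set.Ico (p i) (p (i + 1)), T x = x + σ i) ∧
    Set.BijOn T (Set.Ico c d) (Set.Ico c d)

/-- A right-continuous IET of `[0, 1)`. -/
def IsIET (T : ℝ → ℝ) : Prop := IsIETOn T 0 1

/-- The set of discontinuities of `T` viewed as a map of `[c, d)`. -/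
def Discont (T : ℝ → ℝ) (c d : ℝ) : Set ℝ :=
  {x | x ∈ Set.Ico c d ∧ ¬ ContinuousWithinAt T (Set.Ico c d) x}

/-- The first return time of `x` to `Δ` under `T`: `min {n ≥ 1 | T^[n] x ∈ Δ}`. -/
noncomputable def retTime (T : ℝ → ℝ) (Δ : Set ℝ) (x : ℝ) : ℕ :=
  sInf {n : ℕ | 1 ≤ n ∧ T^[n] x ∈ Δ}

/-- The first return (induced) map of `T` on `Δ`. -/
noncomputable def retMap (T : ℝ → ℝ) (Δ : Set ℝ) (x : ℝ) : ℝ :=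
  T^[retTime T Δ x] x

/-- `x ∈ [a,b)` is a `T`-cut on `[a,b)` if some `T^i x`, `0 ≤ i < h_{[a,b),T}(x)`,
is a discontinuity of `T`. -/
def IsTCut (T : ℝ → ℝ) (a b x : ℝ) : Prop :=
  ∃ i < retTime T (Set.Ico a b) x, T^[i] x ∈ Discont T 0 1

namespace IETAux

open Set Filter Function

/-- Bundled data of a right-continuous IET of `[0,1)`. -/
structure Data (T : ℝ → ℝ) (N : ℕ) (p σ : ℕ → ℝ) : Prop where
  hN : 1 ≤ N
  hp0 : p 0 = 0
  hpN : p N = 1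
  hplt : ∀ i < N, p i < p (i + 1)
  hbr : ∀ i < N, ∀ x ∈ Set.Ico (p i) (p (i + 1)), T x = x + σ i
  hbij : Set.BijOn T (Set.Ico 0 1) (Set.Ico 0 1)

variable {T : ℝ → ℝ} {N : ℕ} {p σ : ℕ → ℝ}

theorem Data.mem_iter (hd : Data T N p σ) {x : ℝ} (hx : x ∈ Ico (0:ℝ) 1) (n : ℕ) :
    T^[n] x ∈ Ico (0:ℝ) 1 :=
  hd.hbij.mapsTo.iterate n hx

theorem Data.injOn_iter (hd : Data T N p σ) (n : ℕ) :
    Set.InjOn T^[n] (Ico (0:ℝ) 1) := by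
  induction n with
  | zero => simpa using fun x hx y hy h => h
  | succ n ih =>
    intro x hx y hy h
    rw [Function.iterate_succ_apply', Function.iterate_succ_apply'] at h
    exact ih hx hy (hd.hbij.injOn (hd.mem_iter hx n) (hd.mem_iter hy n) h)

theorem Data.pmono (hd : Data T N p σ) : ∀ {i j : ℕ}, i ≤ j → j ≤ N → p i ≤ p j := by
  intro i j hij hjN
  induction j with
  | zero => have : i = 0 := by omega
            subst this; exact le_refl _
  | succ j ih =>
    rcases Nat.eq_or_lt_of_le hij with rfl | h
    · exact le_refl _
    · exact le_trans (ih (by omega) (by omega)) (le_of_lt (hd.hplt j (by omega)))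

/-- every `x ∈ [0,1)` lies in a branch `[p i, p (i+1))`. -/
theorem Data.branchR (hd : Data T N p σ) {x : ℝ} (hx : x ∈ Ico (0:ℝ) 1) :
    ∃ i < N, p i ≤ x ∧ x < p (i + 1) := by
  classical
  set J := (Finset.range (N + 1)).filter (fun j => x < p j) with hJ
  have hNJ : N ∈ J := by
    simp only [hJ, Finset.mem_filter, Finset.mem_range]
    exact ⟨Nat.lt_succ_self N, by rw [hd.hpN]; exact hx.2⟩
  have hne : J.Nonempty := ⟨N, hNJ⟩
  set j0 := J.min' hne with hj0
  have hj0J : j0 ∈ J := J.min'_mem hne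
  have hj0lt : x < p j0 := (Finset.mem_filter.mp hj0J).2
  have hj0rng : j0 < N + 1 := Finset.mem_range.mp (Finset.mem_filter.mp hj0J).1
  have hj0pos : j0 ≠ 0 := by
    intro h
    rw [h, hd.hp0] at hj0lt
    exact absurd hx.1 (not_le.mpr hj0lt)
  obtain ⟨i, hisucc⟩ := Nat.exists_eq_succ_of_ne_zero hj0pos
  rw [hisucc] at hj0lt hj0rng
  refine ⟨i, by omega, ?_, hj0lt⟩
  by_contra h
  push_neg at h
  have : i ∈ J := by
    simp only [hJ, Finset.mem_filter, Finset.mem_range]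
    exact ⟨by omega, h⟩
  have h2 := J.min'_le i this
  rw [← hj0, hisucc] at h2
  omega

theorem Data.branchL (hd : Data T N p σ) {x : ℝ} (hx0 : 0 < x) (hx1 : x ≤ 1) :
    ∃ i < N, p i < x ∧ x ≤ p (i + 1) := by
  classical
  set J := (Finset.range (N + 1)).filter (fun j => p j < x) with hJ
  have h0J : 0 ∈ J := by
    simp only [hJ, Finset.mem_filter, Finset.mem_range]
    exact ⟨Nat.succ_pos N, by rw [hd.hp0]; exact hx0⟩
  have hne : J.Nonempty := ⟨0, h0J⟩
  set i := J.max' hne with hi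
  have hiJ : i ∈ J := J.max'_mem hne
  have hilt : p i < x := (Finset.mem_filter.mp hiJ).2
  have hirng : i < N + 1 := Finset.mem_range.mp (Finset.mem_filter.mp hiJ).1
  have hiN : i ≠ N := by
    intro h
    rw [h, hd.hpN] at hilt
    exact absurd hx1 (not_le.mpr hilt)
  refine ⟨i, by omega, hilt, ?_⟩
  by_contra h
  push_neg at h
  have : i + 1 ∈ J := by
    simp only [hJ, Finset.mem_filter, Finset.mem_range]
    exact ⟨by omega, h⟩
  have := J.le_max' (i + 1) this
  omega

/-- right-local translation. -/
theorem Data.right_trans (hd : Data T N p σ) {x : ℝ} (hx : x ∈ Ico (0:ℝ) 1) :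
    ∃ δ > 0, ∀ u, x ≤ u → u < x + δ → T u = u + (T x - x) := by
  obtain ⟨i, hiN, hle, hlt⟩ := hd.branchR hx
  have hTx : T x = x + σ i := hd.hbr i hiN x ⟨hle, hlt⟩
  refine ⟨p (i + 1) - x, by linarith, fun u hu1 hu2 => ?_⟩
  have : T u = u + σ i := hd.hbr i hiN u ⟨le_trans hle hu1, by linarith⟩
  rw [this, hTx]; ring

/-- left-local translation (with unspecified offset). -/
theorem Data.left_trans (hd : Data T N p σ) {x : ℝ} (hx0 : 0 < x) (hx1 : x ≤ 1) :
    ∃ δ > 0, ∃ c : ℝ, ∀ u, x - δ < u → u < x → T u = u + c := by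
  obtain ⟨i, hiN, hlt, hle⟩ := hd.branchL hx0 hx1
  refine ⟨x - p i, by linarith, σ i, fun u hu1 hu2 => ?_⟩
  exact hd.hbr i hiN u ⟨by linarith, by linarith⟩

/-- a point of `(0,1)` that is not a discontinuity is locally a translation. -/
theorem Data.not_discont_trans (hd : Data T N p σ) {x : ℝ} (hx : x ∈ Ioo (0:ℝ) 1)
    (hnd : x ∉ Discont T 0 1) :
    ∃ δ > 0, ∀ u, |u - x| < δ → T u = u + (T x - x) := by
  have hxI : x ∈ Ico (0:ℝ) 1 := ⟨le_of_lt hx.1, hx.2⟩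
  have hcw : ContinuousWithinAt T (Ico (0:ℝ) 1) x := by
    by_contra h
    exact hnd ⟨hxI, h⟩
  obtain ⟨δ1, hδ1, hR⟩ := hd.right_trans hxI
  obtain ⟨δ2, hδ2, c, hL⟩ := hd.left_trans hx.1 (le_of_lt hx.2)
  -- show c = T x - x using continuity from the left
  set δ3 := min δ2 (min x (1 - x)) with hδ3
  have hδ3pos : 0 < δ3 := by
    apply lt_min hδ2; exact lt_min hx.1 (by linarith [hx.2])
  have hIooMem : Ioo (x - δ3) x ∈ nhdsWithin x (Iio x) :=
    Ioo_mem_nhdsLT_of_mem ⟨by linarith, le_refl x⟩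
  have hsub : Ioo (x - δ3) x ⊆ Ico (0:ℝ) 1 := by
    intro u hu
    constructor
    · have : x - δ3 ≥ 0 := by
        have := min_le_right δ2 (min x (1 - x))
        have := min_le_left x (1 - x)
        simp only [hδ3] at *
        nlinarith [min_le_right δ2 (min x (1-x)), min_le_left x (1-x)]
      linarith [hu.1]
    · linarith [hu.2, hx.2]
  have hle : nhdsWithin x (Iio x) ≤ nhdsWithin x (Ico (0:ℝ) 1) := by
    apply nhdsWithin_le_of_mem
    exact mem_of_superset hIooMem hsub
  have h1 : Tendsto T (nhdsWithin x (Iio x)) (nhds (T x)) := hcw.mono_left hle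
  have h2 : Tendsto T (nhdsWithin x (Iio x)) (nhds (x + c)) := by
    have heq : ∀ᶠ u in nhdsWithin x (Iio x), T u = u + c := by
      filter_upwards [hIooMem] with u hu
      exact hL u (by linarith [hu.1, min_le_left δ2 (min x (1 - x))]) hu.2
    have : Tendsto (fun u : ℝ => u + c) (nhdsWithin x (Iio x)) (nhds (x + c)) := by
      apply Tendsto.mono_left _ nhdsWithin_le_nhds
      exact (continuous_id.add continuous_const).tendsto x
    exact Tendsto.congr' (by filter_upwards [heq] with u hu using hu.symm) this
  have hc : x + c = T x := tendsto_nhds_unique h2 h1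
  refine ⟨min δ1 δ2, lt_min hδ1 hδ2, fun u hu => ?_⟩
  rcases le_or_gt x u with h | h
  · exact hR u h (by cases abs_lt.mp hu; linarith [min_le_left δ1 δ2])
  · have : T u = u + c := hL u (by cases abs_lt.mp hu; linarith [min_le_right δ1 δ2]) h
    rw [this]; linarith [hc]

/-- the preimage of 0 is a discontinuity (given aperiodicity). -/
theorem Data.zero_pre_discont (hd : Data T N p σ)
    (hap : ∀ x ∈ Set.Ico (0 : ℝ) 1, ∀ n : ℕ, 1 ≤ n → T^[n] x ≠ x)
    {e : ℝ} (he : e ∈ Ico (0:ℝ) 1) (h0 : T e = 0) : e ∈ Discont T 0 1 := by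
  have he0 : e ≠ 0 := by
    intro h
    have := hap 0 (by constructor <;> norm_num) 1 le_rfl
    rw [Function.iterate_one] at this
    rw [h] at h0
    exact this h0
  have heI : e ∈ Ioo (0:ℝ) 1 := ⟨lt_of_le_of_ne he.1 (Ne.symm he0), he.2⟩
  by_contra hnd
  obtain ⟨δ, hδ, htr⟩ := hd.not_discont_trans heI hnd
  set u := e - min δ e / 2 with hu
  have hmin : 0 < min δ e := lt_min hδ heI.1
  have hu1 : |u - e| < δ := by
    rw [hu]
    rw [abs_sub_comm]
    rw [abs_of_pos (by linarith)]
    linarith [min_le_left δ e]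
  have huI : u ∈ Ico (0:ℝ) 1 := by
    constructor
    · have := min_le_right δ e; simp only [hu]; linarith
    · simp only [hu]; linarith [heI.2]
  have := htr u hu1
  rw [h0] at this
  have h2 : T u = u - e := by linarith [this]
  have := (hd.hbij.mapsTo huI).1
  rw [h2] at this
  simp only [hu] at this
  linarith [min_le_left δ e]

/-- discontinuities are among the break points. -/
theorem Data.discont_subset (hd : Data T N p σ) {x : ℝ} (hx : x ∈ Discont T 0 1) :
    ∃ i ≤ N, p i = x := by
  obtain ⟨hxI, hncw⟩ := hx
  by_contra h
  push_neg at h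
  obtain ⟨i, hiN, hle, hlt⟩ := hd.branchR hxI
  have hne : p i ≠ x := h i (le_of_lt hiN)
  have hlt' : p i < x := lt_of_le_of_ne hle hne
  apply hncw
  have : ∀ᶠ u in nhds x, T u = u + σ i := by
    have : Ioo (p i) (p (i+1)) ∈ nhds x := Ioo_mem_nhds hlt' hlt
    filter_upwards [this] with u hu
    exact hd.hbr i hiN u ⟨le_of_lt hu.1, hu.2⟩
  have hC : ContinuousWithinAt (fun u : ℝ => u + σ i) (Ico (0:ℝ) 1) x :=
    (continuous_id.add continuous_const).continuousWithinAt
  apply hC.congr_of_eventuallyEq _ (hd.hbr i hiN x ⟨hle, hlt⟩)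
  exact (this.filter_mono nhdsWithin_le_nhds)

/-- helper: positive lower bound for finitely many positive values. -/
theorem finmin (f : ℕ → ℝ) (n : ℕ) (hf : ∀ r ≤ n, 0 < f r) :
    ∃ δ > 0, ∀ r ≤ n, δ ≤ f r := by
  induction n with
  | zero => exact ⟨f 0, hf 0 le_rfl, fun r hr => by simp_all⟩
  | succ n ih =>
    obtain ⟨δ, hδ, hle⟩ := ih (fun r hr => hf r (le_trans hr (Nat.le_succ n)))
    refine ⟨min δ (f (n+1)), lt_min hδ (hf (n+1) le_rfl), fun r hr => ?_⟩
    rcases Nat.lt_succ_iff_lt_or_eq.mp (Nat.lt_succ_of_le hr) with h | rfl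
    · exact le_trans (min_le_left _ _) (hle r (Nat.lt_succ_iff.mp h))
    · exact min_le_right _ _

/-- iterated right translation. -/
theorem Data.iter_right (hd : Data T N p σ) {z : ℝ} (hz : z ∈ Ico (0:ℝ) 1) (n : ℕ) :
    ∃ δ > 0, ∀ u, z ≤ u → u < z + δ → ∀ r ≤ n, T^[r] u = T^[r] z + (u - z) := by
  induction n with
  | zero =>
    exact ⟨1, one_pos, fun u h1 h2 r hr => by
      interval_cases r; simp⟩
  | succ n ih =>
    obtain ⟨δ0, hδ0, H⟩ := ih
    obtain ⟨δ1, hδ1, HR⟩ := hd.right_trans (hd.mem_iter hz n)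
    refine ⟨min δ0 δ1, lt_min hδ0 hδ1, fun u h1 h2 r hr => ?_⟩
    rcases Nat.lt_succ_iff_lt_or_eq.mp (Nat.lt_succ_of_le hr) with h | rfl
    · exact H u h1 (by linarith [min_le_left δ0 δ1]) r (Nat.lt_succ_iff.mp h)
    · have hn : T^[n] u = T^[n] z + (u - z) :=
        H u h1 (by linarith [min_le_left δ0 δ1]) n le_rfl
      rw [Function.iterate_succ_apply', Function.iterate_succ_apply', hn]
      have := HR (T^[n] z + (u - z)) (by linarith) (by linarith [min_le_right δ0 δ1])
      rw [this]; ring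

/-- iterated left translation, assuming no discontinuity on the orbit. -/
theorem Data.iter_left (hd : Data T N p σ) {z : ℝ} (hz : z ∈ Ioo (0:ℝ) 1) (n : ℕ)
    (hnd : ∀ r < n, T^[r] z ∉ Discont T 0 1) :
    ∃ δ > 0, δ ≤ z ∧ ∀ u, z - δ < u → u < z → ∀ r ≤ n, T^[r] u = T^[r] z - (z - u) := by
  induction n with
  | zero =>
    exact ⟨z, hz.1, le_rfl, fun u h1 h2 r hr => by interval_cases r; simp⟩
  | succ n ih =>
    obtain ⟨δ0, hδ0, hδ0z, H⟩ := ih (fun r hr => hnd r (Nat.lt_succ_of_lt hr))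
    have hzI : z ∈ Ico (0:ℝ) 1 := ⟨le_of_lt hz.1, hz.2⟩
    set w := T^[n] z with hw
    have hwI : w ∈ Ico (0:ℝ) 1 := hd.mem_iter hzI n
    have hw0 : w ≠ 0 := by
      intro h
      set u := z - δ0 / 2 with hu
      have huI : u ∈ Ico (0:ℝ) 1 := ⟨by simp only [hu]; linarith, by simp only [hu]; linarith [hz.2]⟩
      have := H u (by simp only [hu]; linarith) (by simp only [hu]; linarith) n le_rfl
      have h2 := (hd.mem_iter huI n).1
      rw [this, ← hw, h] at h2
      simp only [hu] at h2
      linarith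
    have hwIoo : w ∈ Ioo (0:ℝ) 1 := ⟨lt_of_le_of_ne hwI.1 (Ne.symm hw0), hwI.2⟩
    obtain ⟨δ1, hδ1, htr⟩ := hd.not_discont_trans hwIoo (hnd n (Nat.lt_succ_self n))
    refine ⟨min δ0 δ1, lt_min hδ0 hδ1, le_trans (min_le_left _ _) hδ0z,
      fun u h1 h2 r hr => ?_⟩
    rcases Nat.lt_succ_iff_lt_or_eq.mp (Nat.lt_succ_of_le hr) with h | rfl
    · exact H u (by linarith [min_le_left δ0 δ1]) h2 r (Nat.lt_succ_iff.mp h)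
    · have hn : T^[n] u = T^[n] z - (z - u) :=
        H u (by linarith [min_le_left δ0 δ1]) h2 n le_rfl
      rw [Function.iterate_succ_apply', Function.iterate_succ_apply', hn, ← hw]
      have habs : |w - (z - u) - w| < δ1 := by
        rw [abs_sub_comm]
        rw [show w - (w - (z-u)) = z - u by ring]
        rw [abs_of_pos (by linarith)]
        linarith [min_le_right δ0 δ1]
      have := htr (w - (z - u)) habs
      rw [this]; ring


/-- pigeonhole: among `n+1` points of `[0,1)` two are within `δ`. -/
theorem pigeon (g : ℕ → ℝ) (δ : ℝ) (hδ : 0 < δ) (n : ℕ)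
    (hmem : ∀ r ≤ n, 0 ≤ g r ∧ g r < 1) (hn : Nat.ceil (1/δ) ≤ n) :
    ∃ r s, r < s ∧ s ≤ n ∧ |g r - g s| < δ := by
  classical
  set K := Nat.ceil (1/δ) with hK
  have hmap : ∀ r ∈ Finset.range (n+1), (⌊g r / δ⌋₊) ∈ Finset.range K := by
    intro r hr
    have hr' : r ≤ n := Nat.lt_succ_iff.mp (Finset.mem_range.mp hr)
    obtain ⟨h0, h1⟩ := hmem r hr'
    rw [Finset.mem_range]
    rw [Nat.floor_lt (div_nonneg h0 (le_of_lt hδ))]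
    calc g r / δ < 1 / δ := by gcongr
    _ ≤ K := Nat.le_ceil _
  have hcard : (Finset.range K).card < (Finset.range (n+1)).card := by
    simp only [Finset.card_range]; omega
  obtain ⟨r, hr, s, hs, hrs, heq⟩ :=
    Finset.exists_ne_map_eq_of_card_lt_of_maps_to hcard hmap
  have key : ∀ r' s', r' ≤ n → s' ≤ n → (⌊g r' / δ⌋₊ = ⌊g s' / δ⌋₊) → |g r' - g s'| < δ := by
    intro r' s' hr' hs' he
    obtain ⟨h0r, h1r⟩ := hmem r' hr'
    obtain ⟨h0s, h1s⟩ := hmem s' hs'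
    set k := ⌊g r' / δ⌋₊ with hk
    have hra : (k:ℝ) ≤ g r' / δ := Nat.floor_le (div_nonneg h0r (le_of_lt hδ))
    have hrb : g r' / δ < k + 1 := by rw [hk]; exact Nat.lt_floor_add_one _
    have hsa : (k:ℝ) ≤ g s' / δ := by rw [he]; exact Nat.floor_le (div_nonneg h0s (le_of_lt hδ))
    have hsb : g s' / δ < k + 1 := by rw [he]; exact Nat.lt_floor_add_one _
    have h1 : (k:ℝ) * δ ≤ g r' := (le_div_iff₀ hδ).mp hra
    have h2 : g r' < (k + 1) * δ := (div_lt_iff₀ hδ).mp hrb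
    have h3 : (k:ℝ) * δ ≤ g s' := (le_div_iff₀ hδ).mp hsa
    have h4 : g s' < (k + 1) * δ := (div_lt_iff₀ hδ).mp hsb
    rw [abs_lt]; constructor <;> nlinarith
  have hrn : r ≤ n := Nat.lt_succ_iff.mp (Finset.mem_range.mp hr)
  have hsn2 : s ≤ n := Nat.lt_succ_iff.mp (Finset.mem_range.mp hs)
  rcases lt_trichotomy r s with h | h | h
  · exact ⟨r, s, h, hsn2, key r s hrn hsn2 heq⟩
  · exact absurd h hrs
  · exact ⟨s, r, h, hrn, key s r hsn2 hrn heq.symm⟩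

/-- every point of a subinterval `[a,b) ⊆ [0,1)` returns to it. -/
theorem Data.everywhere_return (hd : Data T N p σ) {a b z : ℝ}
    (ha : 0 ≤ a) (hb : b ≤ 1) (hz : z ∈ Ico a b) :
    ∃ n, 1 ≤ n ∧ T^[n] z ∈ Ico a b := by
  classical
  by_contra HNR
  push_neg at HNR
  have hzI : z ∈ Ico (0:ℝ) 1 := ⟨le_trans ha hz.1, lt_of_lt_of_le hz.2 hb⟩
  set CF : Finset ℝ := insert a ((Finset.range (N+1)).image p) with hCF
  have h1CF : (1:ℝ) ∈ CF := by
    apply Finset.mem_insert_of_mem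
    rw [Finset.mem_image]
    exact ⟨N, Finset.mem_range.mpr (Nat.lt_succ_self N), hd.hpN⟩
  have haCF : a ∈ CF := Finset.mem_insert_self a _
  have hFne : ∀ x : ℝ, x < 1 → (CF.filter (fun c => x < c)).Nonempty := by
    intro x hx
    exact ⟨1, Finset.mem_filter.mpr ⟨h1CF, hx⟩⟩
  set μ : ℝ → ℝ := fun x =>
    if h : (CF.filter (fun c => x < c)).Nonempty then (CF.filter (fun c => x < c)).min' h - x
    else 1 with hμ
  have hμval : ∀ x : ℝ, x < 1 → x + μ x ∈ CF ∧ x < x + μ x := by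
    intro x hx
    have h := hFne x hx
    have hmem := (CF.filter (fun c => x < c)).min'_mem h
    rw [Finset.mem_filter] at hmem
    simp only [hμ, dif_pos h]
    constructor
    · have hx2 : x + ((CF.filter (fun c => x < c)).min' h - x)
          = (CF.filter (fun c => x < c)).min' h := by ring
      rw [hx2]; exact hmem.1
    · linarith [hmem.2]
  have hμle : ∀ x : ℝ, x < 1 → ∀ w ∈ CF, x < w → μ x ≤ w - x := by
    intro x hx w hw hxw
    have h := hFne x hx
    simp only [hμ, dif_pos h]
    have := (CF.filter (fun c => x < c)).min'_le w (Finset.mem_filter.mpr ⟨hw, hxw⟩)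
    linarith
  have hμpos : ∀ x : ℝ, x < 1 → 0 < μ x := by
    intro x hx
    have := (hμval x hx).2
    linarith
  set m : ℕ → ℝ := fun r => μ (T^[r] z) with hm
  have hmpos : ∀ r, 0 < m r := fun r => hμpos _ (hd.mem_iter hzI r).2
  set δ : ℕ → ℝ := fun n =>
    Nat.rec (min (b - z) (m 0)) (fun k ih => min ih (m (k+1))) n with hδdef
  have hδsucc : ∀ n, δ (n+1) = min (δ n) (m (n+1)) := fun n => rfl
  have hδ0 : δ 0 = min (b - z) (m 0) := rfl
  have hδpos : ∀ n, 0 < δ n := by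
    intro n
    induction n with
    | zero => rw [hδ0]; exact lt_min (by linarith [hz.2]) (hmpos 0)
    | succ n ih => rw [hδsucc]; exact lt_min ih (hmpos (n+1))
  have hδbz : ∀ n, δ n ≤ b - z := by
    intro n
    induction n with
    | zero => rw [hδ0]; exact min_le_left _ _
    | succ n ih => rw [hδsucc]; exact le_trans (min_le_left _ _) ih
  have hδstep : ∀ n, δ (n+1) ≤ δ n := fun n => by rw [hδsucc]; exact min_le_left _ _
  have hδmono : ∀ n k, n ≤ k → δ k ≤ δ n := by
    intro n k hnk
    induction k with
    | zero => have : n = 0 := by omega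
              subst this; exact le_rfl
    | succ k ih =>
      rcases Nat.eq_or_lt_of_le hnk with rfl | h
      · exact le_rfl
      · exact le_trans (hδstep k) (ih (by omega))
  have hδlem : ∀ n r, r ≤ n → δ n ≤ m r := by
    intro n
    induction n with
    | zero => intro r hr
              have : r = 0 := by omega
              subst this
              rw [hδ0]; exact min_le_right _ _
    | succ n ih =>
      intro r hr
      rcases Nat.eq_or_lt_of_le hr with rfl | h
      · rw [hδsucc]; exact min_le_right _ _
      · exact le_trans (hδstep n) (ih r (by omega))
  -- main translation + non-return property of the right window
  have P : ∀ n, ∀ u, z ≤ u → u < z + δ n →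
      (∀ r ≤ n, T^[r] u = T^[r] z + (u - z)) ∧
      (∀ r, 1 ≤ r → r ≤ n → T^[r] u ∉ Ico a b) := by
    intro n
    induction n with
    | zero =>
      intro u h1 h2
      constructor
      · intro r hr
        have : r = 0 := by omega
        subst this; simp
      · intro r hr1 hr2; omega
    | succ n ih =>
      intro u h1 h2
      have h2n : u < z + δ n := lt_of_lt_of_le h2 (by linarith [hδstep n])
      obtain ⟨ih1, ih2⟩ := ih u h1 h2n
      have hw : T^[n] z ∈ Ico (0:ℝ) 1 := hd.mem_iter hzI n
      have hfor : T^[n+1] u = T^[n+1] z + (u - z) := by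
        obtain ⟨i, hiN, hle, hlt⟩ := hd.branchR hw
        have hpCF : p (i+1) ∈ CF := by
          apply Finset.mem_insert_of_mem
          rw [Finset.mem_image]
          exact ⟨i+1, Finset.mem_range.mpr (by omega), rfl⟩
        have hmn : m n ≤ p (i+1) - T^[n] z := hμle _ hw.2 _ hpCF hlt
        have huz : u - z < m n := by
          have := hδlem (n+1) n (by omega)
          linarith
        have hmem2 : T^[n] z + (u - z) ∈ Ico (p i) (p (i+1)) :=
          ⟨by linarith, by linarith⟩
        rw [Function.iterate_succ_apply', Function.iterate_succ_apply',
          ih1 n le_rfl, hd.hbr i hiN _ hmem2, hd.hbr i hiN _ ⟨hle, hlt⟩]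
        ring
      constructor
      · intro r hr
        rcases Nat.eq_or_lt_of_le hr with rfl | h
        · exact hfor
        · exact ih1 r (by omega)
      · intro r hr1 hr2
        rcases Nat.eq_or_lt_of_le hr2 with rfl | h
        · have hnr := HNR (n+1) (by omega)
          rcases lt_or_ge (T^[n+1] z) a with hlt | hge
          · have hm1 : m (n+1) ≤ a - T^[n+1] z :=
              hμle _ (hd.mem_iter hzI (n+1)).2 a haCF hlt
            have : u - z < m (n+1) := by
              have := hδlem (n+1) (n+1) le_rfl
              linarith
            intro hmem
            rw [hfor] at hmem
            linarith [hmem.1]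
          · have hgeb : b ≤ T^[n+1] z := by
              by_contra hc
              push_neg at hc
              exact hnr ⟨hge, hc⟩
            intro hmem
            rw [hfor] at hmem
            linarith [hmem.2]
        · exact ih2 r hr1 (by omega)
  -- shrink times are injectively labelled by cut points
  set cn : ℕ → ℝ := fun n => T^[n] z + m n with hcn
  have hcnCF : ∀ n, cn n ∈ CF ∧ T^[n] z < cn n := fun n => hμval _ (hd.mem_iter hzI n).2
  have hshr : ∀ n, δ (n+1) < δ n → δ (n+1) = m (n+1) := by
    intro n h
    rw [hδsucc] at h ⊢
    rcases min_cases (δ n) (m (n+1)) with ⟨h1, h2⟩ | ⟨h1, h2⟩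
    · rw [h1] at h; exact absurd h (lt_irrefl _)
    · exact h1
  set Sh : Set ℕ := {n | 0 < n ∧ δ n < δ (n-1)} with hSh
  have hShInj : Set.InjOn cn Sh := by
    have key : ∀ n n', n ∈ Sh → n' ∈ Sh → n < n' → cn n = cn n' → False := by
      intro n n' hn hn' hlt heq
      obtain ⟨hn1, hn2⟩ := hn
      obtain ⟨hn'1, hn'2⟩ := hn'
      have hδn : δ n = m n := by
        have h1 := hshr (n-1) (by rw [show n - 1 + 1 = n by omega]; exact hn2)
        rwa [show n - 1 + 1 = n by omega] at h1
      have hδn' : δ n' = m n' := by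
        have h1 := hshr (n'-1) (by rw [show n' - 1 + 1 = n' by omega]; exact hn'2)
        rwa [show n' - 1 + 1 = n' by omega] at h1
      have hlt2 : m n' < δ n := by
        calc m n' = δ n' := hδn'.symm
        _ < δ (n'-1) := hn'2
        _ ≤ δ n := hδmono n (n'-1) (by omega)
      have heq2 : T^[n] z + m n = T^[n'] z + m n' := by
        have e1 : cn n = T^[n] z + m n := rfl
        have e2 : cn n' = T^[n'] z + m n' := rfl
        rw [← e1, ← e2, heq]
      have hlt3 : m n' < m n := by rw [hδn] at hlt2; exact hlt2
      have hTlt : T^[n] z < T^[n'] z := by linarith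
      set u := z + (T^[n'] z - T^[n] z) with hu
      have hu1 : z ≤ u := by simp only [hu]; linarith
      have hu2 : u < z + δ n := by
        have h3 : T^[n'] z < cn n' := (hcnCF n').2
        rw [← heq] at h3
        have h4 : T^[n'] z < T^[n] z + m n := h3
        simp only [hu]
        rw [hδn]
        linarith
      have hfor := (P n u hu1 hu2).1 n le_rfl
      have heq2 : T^[n] u = T^[n] (T^[n'-n] z) := by
        rw [hfor]
        have := Function.iterate_add_apply T n (n'-n) z
        rw [show n + (n'-n) = n' by omega] at this
        rw [← this]
        simp only [hu]; ring
      have huI : u ∈ Ico (0:ℝ) 1 := by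
        constructor
        · simp only [hu]; linarith [hzI.1]
        · have := hδbz n
          have : u < b := by simp only [hu] at hu2 ⊢; linarith
          linarith
      have hueq : u = T^[n'-n] z :=
        hd.injOn_iter n huI (hd.mem_iter hzI (n'-n)) heq2
      apply HNR (n'-n) (by omega)
      rw [← hueq]
      constructor
      · simp only [hu]; linarith [hz.1]
      · have := hδbz n
        simp only [hu] at hu2 ⊢; linarith
    intro n hn n' hn' heq
    rcases lt_trichotomy n n' with h | h | h
    · exact absurd heq (fun he => key n n' hn hn' h he)
    · exact h
    · exact absurd heq.symm (fun he => key n' n hn' hn h he)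
  have hShFin : Sh.Finite := by
    apply Set.Finite.of_finite_image _ hShInj
    apply Set.Finite.subset CF.finite_toSet
    rintro _ ⟨n, hn, rfl⟩
    exact (hcnCF n).1
  obtain ⟨n₀, hn₀⟩ := hShFin.bddAbove
  rw [mem_upperBounds] at hn₀
  have hconst : ∀ k, δ (n₀ + k) = δ n₀ := by
    intro k
    induction k with
    | zero => rfl
    | succ k ih =>
      rw [← ih]
      have hle := hδstep (n₀ + k)
      rcases eq_or_lt_of_le hle with h | h
      · rw [show n₀ + (k+1) = (n₀ + k) + 1 by omega]; exact h
      · exfalso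
        have : (n₀ + k + 1) ∈ Sh := ⟨by omega, by
          rw [show n₀ + k + 1 - 1 = n₀ + k by omega]; exact h⟩
        have := hn₀ _ this
        omega
  -- separation of orbit points
  have hsep : ∀ n r s, r < s → s ≤ n → ¬(|T^[r] z - T^[s] z| < δ n) := by
    intro n r s hrs hsn habs
    rw [abs_lt] at habs
    rcases le_or_gt (T^[r] z) (T^[s] z) with h | h
    · set u := z + (T^[s] z - T^[r] z) with hu
      have hu1 : z ≤ u := by simp only [hu]; linarith
      have hu2 : u < z + δ n := by simp only [hu]; linarith [habs.2]
      have hfor := (P n u hu1 hu2).1 r (by omega)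
      have heq2 : T^[r] u = T^[r] (T^[s-r] z) := by
        rw [hfor]
        have := Function.iterate_add_apply T r (s-r) z
        rw [show r + (s-r) = s by omega] at this
        rw [← this]
        simp only [hu]; ring
      have huI : u ∈ Ico (0:ℝ) 1 := by
        have hb2 := hδbz n
        constructor
        · simp only [hu]; linarith [hzI.1]
        · simp only [hu] at hu2 ⊢; linarith [hzI.2]
      have hueq : u = T^[s-r] z :=
        hd.injOn_iter r huI (hd.mem_iter hzI (s-r)) heq2
      apply HNR (s-r) (by omega)
      rw [← hueq]
      have hb2 := hδbz n
      exact ⟨by simp only [hu]; linarith [hz.1], by simp only [hu] at hu2 ⊢; linarith⟩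
    · set u := z + (T^[r] z - T^[s] z) with hu
      have hu1 : z ≤ u := by simp only [hu]; linarith
      have hu2 : u < z + δ n := by simp only [hu]; linarith [habs.1]
      have hfor := (P n u hu1 hu2).1 s (by omega)
      have heq2 : T^[r] (T^[s-r] u) = T^[r] z := by
        have := Function.iterate_add_apply T r (s-r) u
        rw [show r + (s-r) = s by omega] at this
        rw [← this, hfor]
        simp only [hu]; ring
      have huI : u ∈ Ico (0:ℝ) 1 := by
        have hb2 := hδbz n
        constructor
        · simp only [hu]; linarith [hzI.1]
        · simp only [hu] at hu2 ⊢; linarith [hzI.2]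
      have hueq : T^[s-r] u = z :=
        hd.injOn_iter r (hd.mem_iter huI (s-r)) hzI heq2
      have := (P n u hu1 hu2).2 (s-r) (by omega) (by omega)
      apply this
      rw [hueq]
      exact hz
  -- pigeonhole contradiction
  set K := Nat.ceil (1 / δ n₀) with hK
  set n := n₀ + K with hn
  have hδn : δ n = δ n₀ := hconst K
  obtain ⟨r, s, hrs, hsn, hclose⟩ := pigeon (fun r => T^[r] z) (δ n₀) (hδpos n₀) n
    (fun r _ => ⟨(hd.mem_iter hzI r).1, (hd.mem_iter hzI r).2⟩) (by omega)
  exact hsep n r s hrs hsn (by rw [hδn]; exact hclose)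

/-- characterization of the return time. -/
theorem retTime_eq {T : ℝ → ℝ} {a b u : ℝ} {h' : ℕ} (h1 : 1 ≤ h')
    (h2 : T^[h'] u ∈ Ico a b) (h3 : ∀ m, 1 ≤ m → m < h' → T^[m] u ∉ Ico a b) :
    retTime T (Ico a b) u = h' := by
  have hm : h' ∈ {n : ℕ | 1 ≤ n ∧ T^[n] u ∈ Ico a b} := ⟨h1, h2⟩
  show sInf {n : ℕ | 1 ≤ n ∧ T^[n] u ∈ Ico a b} = h'
  apply le_antisymm
  · exact Nat.sInf_le hm
  · apply le_csInf ⟨h', hm⟩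
    rintro m ⟨hm1, hm2⟩
    by_contra hc
    push_neg at hc
    exact h3 m hm1 hc hm2

theorem Data.retTime_spec (hd : Data T N p σ) {a b z : ℝ} (ha : 0 ≤ a) (hb : b ≤ 1)
    (hz : z ∈ Ico a b) :
    1 ≤ retTime T (Ico a b) z ∧ T^[retTime T (Ico a b) z] z ∈ Ico a b ∧
      ∀ m, 1 ≤ m → m < retTime T (Ico a b) z → T^[m] z ∉ Ico a b := by
  obtain ⟨n, hn1, hn2⟩ := hd.everywhere_return ha hb hz
  have hne : {n : ℕ | 1 ≤ n ∧ T^[n] z ∈ Ico a b}.Nonempty := ⟨n, hn1, hn2⟩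
  have hmem := Nat.sInf_mem hne
  refine ⟨hmem.1, hmem.2, fun m hm1 hm2 hmem2 => ?_⟩
  have hle : sInf {n : ℕ | 1 ≤ n ∧ T^[n] z ∈ Ico a b} ≤ m := Nat.sInf_le ⟨hm1, hmem2⟩
  have hle2 : retTime T (Ico a b) z ≤ m := hle
  omega

/-- right-continuity data for the return map. -/
theorem Data.right_ret (hd : Data T N p σ) {a b z : ℝ} (ha : 0 ≤ a) (hb : b ≤ 1)
    (hz : z ∈ Ico a b) :
    ∃ η > 0, ∀ u, z ≤ u → u < z + η →
      retTime T (Ico a b) u = retTime T (Ico a b) z ∧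
      retMap T (Ico a b) u = retMap T (Ico a b) z + (u - z) := by
  obtain ⟨h1, h2, h3⟩ := hd.retTime_spec ha hb hz
  set h := retTime T (Ico a b) z with hh
  have hzI : z ∈ Ico (0:ℝ) 1 := ⟨le_trans ha hz.1, lt_of_lt_of_le hz.2 hb⟩
  obtain ⟨δ0, hδ0, HF⟩ := hd.iter_right hzI h
  set f : ℕ → ℝ := fun r =>
    if r = 0 then 1 else if r = h then b - T^[h] z else
      if T^[r] z < a then a - T^[r] z else 1 with hf
  have hfpos : ∀ r ≤ h, 0 < f r := by
    intro r hr
    simp only [hf]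
    split
    · norm_num
    · split
      · rename_i h1' h2'
        subst h2'
        linarith [h2.2]
      · split
        · rename_i h1' h2' h3'
          linarith
        · norm_num
  obtain ⟨δ1, hδ1, hδ1le⟩ := finmin f h hfpos
  refine ⟨min δ0 δ1, lt_min hδ0 hδ1, fun u hu1 hu2 => ?_⟩
  have hform : ∀ r ≤ h, T^[r] u = T^[r] z + (u - z) :=
    fun r hr => HF u hu1 (by linarith [min_le_left δ0 δ1]) r hr
  have huz : u - z < δ1 := by linarith [min_le_right δ0 δ1]
  have hret : retTime T (Ico a b) u = h := by
    apply retTime_eq h1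
    · rw [hform h le_rfl]
      constructor
      · linarith [h2.1]
      · have : f h = b - T^[h] z := by
          simp only [hf]
          rw [if_neg (by omega)]; simp
        have := hδ1le h le_rfl
        linarith [this, huz]
    · intro m hm1 hm2
      have hnm := h3 m hm1 hm2
      rw [hform m (le_of_lt hm2)]
      rcases lt_or_ge (T^[m] z) a with hc | hc
      · have hfm : f m = a - T^[m] z := by
          simp only [hf]
          rw [if_neg (by omega), if_neg (by omega), if_pos hc]
        have := hδ1le m (le_of_lt hm2)
        intro hmem
        rw [hfm] at this
        linarith [hmem.1]
      · have hcb : b ≤ T^[m] z := by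
          by_contra hcc
          push_neg at hcc
          exact hnm ⟨hc, hcc⟩
        intro hmem
        linarith [hmem.2]
  refine ⟨hret, ?_⟩
  rw [retMap, retMap, hret, ← hh, hform h le_rfl]

/-- left-continuity data for the return map at non-cut points. -/
theorem Data.left_ret (hd : Data T N p σ) {a b z : ℝ} (ha : 0 ≤ a) (hb : b ≤ 1)
    (hz : z ∈ Ioo a b) (hcut : ¬ IsTCut T a b z)
    (Pa : ∀ z' ∈ Ioo a b, ∀ m : ℕ, 1 ≤ m → T^[m] z' = a →
      (∀ r, 1 ≤ r → r < m → T^[r] z' ∉ Ico a b) → ∃ t < m, T^[t] z' ∈ Discont T 0 1)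
    (Pb : ∀ z' ∈ Ioo a b, ∀ m : ℕ, 1 ≤ m → T^[m] z' = b →
      (∀ r, 1 ≤ r → r < m → T^[r] z' ∉ Ico a b) → ∃ t < m, T^[t] z' ∈ Discont T 0 1) :
    ∃ η > 0, ∀ u, z - η < u → u < z →
      retTime T (Ico a b) u = retTime T (Ico a b) z ∧
      retMap T (Ico a b) u = retMap T (Ico a b) z - (z - u) := by
  have hzc : z ∈ Ico a b := ⟨le_of_lt hz.1, hz.2⟩
  obtain ⟨h1, h2, h3⟩ := hd.retTime_spec ha hb hzc
  set h := retTime T (Ico a b) z with hh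
  have hzI : z ∈ Ioo (0:ℝ) 1 := ⟨lt_of_le_of_lt ha hz.1, lt_of_lt_of_le hz.2 hb⟩
  have hnd : ∀ r < h, T^[r] z ∉ Discont T 0 1 := by
    intro r hr hD
    exact hcut ⟨r, hr, hD⟩
  obtain ⟨δ0, hδ0, hδ0z, HF⟩ := hd.iter_left hzI h hnd
  have hTha : T^[h] z ≠ a := by
    intro heq
    obtain ⟨t, ht, hD⟩ := Pa z hz h h1 heq (fun r hr1 hr2 => h3 r hr1 hr2)
    exact hcut ⟨t, ht, hD⟩
  have hThb : ∀ r, 1 ≤ r → r < h → T^[r] z ≠ b := by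
    intro r hr1 hr2 heq
    obtain ⟨t, ht, hD⟩ := Pb z hz r hr1 heq (fun r' hr1' hr2' => h3 r' hr1' (by omega))
    exact hcut ⟨t, by omega, hD⟩
  set f : ℕ → ℝ := fun r =>
    if r = 0 then 1 else if r = h then T^[h] z - a else
      if b < T^[r] z then T^[r] z - b else 1 with hf
  have hfpos : ∀ r ≤ h, 0 < f r := by
    intro r hr
    simp only [hf]
    split
    · norm_num
    · split
      · rename_i h1' h2'
        subst h2'
        have := h2.1
        cases eq_or_lt_of_le this with
        | inl heq => exact absurd heq.symm hTha
        | inr hlt => linarith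
      · split
        · rename_i h1' h2' h3'
          linarith
        · norm_num
  obtain ⟨δ1, hδ1, hδ1le⟩ := finmin f h hfpos
  refine ⟨min δ0 δ1, lt_min hδ0 hδ1, fun u hu1 hu2 => ?_⟩
  have hform : ∀ r ≤ h, T^[r] u = T^[r] z - (z - u) :=
    fun r hr => HF u (by linarith [min_le_left δ0 δ1]) hu2 r hr
  have huz : z - u < δ1 := by linarith [min_le_right δ0 δ1]
  have hret : retTime T (Ico a b) u = h := by
    apply retTime_eq h1
    · rw [hform h le_rfl]
      constructor
      · have hfh : f h = T^[h] z - a := by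
          simp only [hf]
          rw [if_neg (by omega)]; simp
        have := hδ1le h le_rfl
        rw [hfh] at this
        linarith
      · linarith [h2.2]
    · intro m hm1 hm2
      have hnm := h3 m hm1 hm2
      rw [hform m (le_of_lt hm2)]
      rcases lt_or_ge (T^[m] z) a with hc | hc
      · intro hmem
        linarith [hmem.1]
      · have hcb : b ≤ T^[m] z := by
          by_contra hcc
          push_neg at hcc
          exact hnm ⟨hc, hcc⟩
        have hcb' : b < T^[m] z := lt_of_le_of_ne hcb (Ne.symm (hThb m hm1 hm2))
        have hfm : f m = T^[m] z - b := by
          simp only [hf]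
          rw [if_neg (by omega), if_neg (by omega), if_pos hcb']
        have := hδ1le m (le_of_lt hm2)
        rw [hfm] at this
        intro hmem
        linarith [hmem.2]
  refine ⟨hret, ?_⟩
  rw [retMap, retMap, hret, ← hh, hform h le_rfl]

/-- continuity-within from an eventual affine formula. -/
theorem cwa_of_eventually_affine {f : ℝ → ℝ} {s : Set ℝ} {z : ℝ}
    (h : ∀ᶠ u in nhdsWithin z s, f u = f z + (u - z)) :
    ContinuousWithinAt f s z := by
  have hc : ContinuousWithinAt (fun u : ℝ => f z + (u - z)) s z :=
    ((continuous_const.add (continuous_id.sub continuous_const))).continuousWithinAt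
  apply hc.congr_of_eventuallyEq
  · exact (by filter_upwards [h] with u hu using hu)
  · simp

/-- the main per-cell lemma. -/
theorem Data.cell (hd : Data T N p σ)
    {a b : ℝ} (ha : 0 ≤ a) (hab : a < b) (hb : b ≤ 1)
    (Pa : ∀ z' ∈ Ioo a b, ∀ m : ℕ, 1 ≤ m → T^[m] z' = a →
      (∀ r, 1 ≤ r → r < m → T^[r] z' ∉ Ico a b) → ∃ t < m, T^[t] z' ∈ Discont T 0 1)
    (Pb : ∀ z' ∈ Ioo a b, ∀ m : ℕ, 1 ≤ m → T^[m] z' = b →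
      (∀ r, 1 ≤ r → r < m → T^[r] z' ∉ Ico a b) → ∃ t < m, T^[t] z' ∈ Discont T 0 1) :
    (∀ z ∈ Discont (retMap T (Set.Ico a b)) a b, IsTCut T a b z) ∧
    (∀ z ∈ Discont (retMap T (Set.Ico a b)) a b, ∀ i : ℕ,
      Filter.Tendsto (retMap T (Set.Ico a b)) (nhdsWithin z (Set.Iio z)) (nhds b) →
      Filter.Tendsto (retTime T (Set.Ico a b)) (nhdsWithin z (Set.Iio z)) (nhds i) →
      ∃ r < i, T^[r] z ∈ Discont T 0 1) := by
  classical
  -- continuity at the left endpoint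
  have hCWAa : ContinuousWithinAt (retMap T (Set.Ico a b)) (Ico a b) a := by
    obtain ⟨η, hη, H⟩ := hd.right_ret ha hb (show a ∈ Ico a b from ⟨le_rfl, hab⟩)
    apply cwa_of_eventually_affine
    have h1 : Ioo (a - η) (a + η) ∈ nhds a := Ioo_mem_nhds (by linarith) (by linarith)
    filter_upwards [mem_nhdsWithin_of_mem_nhds h1, self_mem_nhdsWithin] with u hu1 hu2
    exact (H u hu2.1 hu1.2).2
  -- main claim (i)
  have Hi : ∀ z ∈ Discont (retMap T (Set.Ico a b)) a b, IsTCut T a b z := by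
    intro z hz
    obtain ⟨hz1, hz2⟩ := hz
    by_contra hcut
    apply hz2
    rcases eq_or_lt_of_le hz1.1 with heq | hlt
    · rw [← heq]; exact hCWAa
    · have hzoo : z ∈ Ioo a b := ⟨hlt, hz1.2⟩
      obtain ⟨η1, hη1, H1⟩ := hd.right_ret ha hb hz1
      obtain ⟨η2, hη2, H2⟩ := hd.left_ret ha hb hzoo hcut Pa Pb
      apply cwa_of_eventually_affine
      have h1 : Ioo (z - η2) (z + η1) ∈ nhds z := Ioo_mem_nhds (by linarith) (by linarith)
      filter_upwards [mem_nhdsWithin_of_mem_nhds h1] with u hu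
      rcases le_or_gt z u with hc | hc
      · exact (H1 u hc hu.2).2
      · have := (H2 u hu.1 hc).2
        rw [this]; ring
  refine ⟨Hi, ?_⟩
  intro z hz i Htm Hti
  have hzmem := hz
  obtain ⟨hz1, hz2⟩ := hz
  have hza : z ≠ a := by
    intro heq
    apply hz2
    rw [heq]; exact hCWAa
  have hzoo : z ∈ Ioo a b := ⟨lt_of_le_of_ne hz1.1 (Ne.symm hza), hz1.2⟩
  obtain ⟨h1, h2, h3⟩ := hd.retTime_spec ha hb hz1
  obtain ⟨rw', hrw1, hrw2⟩ := Hi z hzmem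
  have hex : ∃ r, T^[r] z ∈ Discont T 0 1 := ⟨rw', hrw2⟩
  set r₀ := Nat.find hex with hr₀def
  have hr₀spec : T^[r₀] z ∈ Discont T 0 1 := Nat.find_spec hex
  have hr₀min : ∀ r < r₀, T^[r] z ∉ Discont T 0 1 := fun r hr => Nat.find_min hex hr
  have hr₀le : r₀ ≤ rw' := Nat.find_min' hex hrw2
  have hr₀lt : r₀ < retTime T (Ico a b) z := lt_of_le_of_lt hr₀le hrw1
  rcases lt_or_ge r₀ i with hcase | hcase
  · exact ⟨r₀, hcase, hr₀spec⟩
  -- i ≤ r₀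
  have hev : ∀ᶠ u in nhdsWithin z (Set.Iio z), retTime T (Ico a b) u = i := by
    have : ({i} : Set ℕ) ∈ nhds i := by simp
    filter_upwards [Hti this] with u hu using hu
  have hi1 : 1 ≤ i := by
    by_contra hc
    push_neg at hc
    interval_cases i
    have hev2 : ∀ᶠ u in nhdsWithin z (Set.Iio z), retMap T (Ico a b) u = u := by
      filter_upwards [hev] with u hu
      rw [retMap, hu, Function.iterate_zero_apply]
    have htid : Filter.Tendsto (retMap T (Ico a b)) (nhdsWithin z (Set.Iio z)) (nhds z) := by
      apply Filter.Tendsto.congr' (by filter_upwards [hev2] with u hu using hu.symm)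
      exact Filter.tendsto_id.mono_left nhdsWithin_le_nhds
    have := tendsto_nhds_unique Htm htid
    linarith [hzoo.2]
  have hzI : z ∈ Ioo (0:ℝ) 1 := ⟨lt_of_le_of_lt ha hzoo.1, lt_of_lt_of_le hzoo.2 hb⟩
  have hnd : ∀ r < i, T^[r] z ∉ Discont T 0 1 := fun r hr => hr₀min r (by omega)
  obtain ⟨δ, hδ, hδz, HF⟩ := hd.iter_left hzI i hnd
  have hevm : ∀ᶠ u in nhdsWithin z (Set.Iio z), retMap T (Ico a b) u = T^[i] z - (z - u) := by
    have hIoo : Ioo (z - δ) z ∈ nhdsWithin z (Set.Iio z) :=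
      Ioo_mem_nhdsLT_of_mem ⟨by linarith, le_rfl⟩
    filter_upwards [hev, hIoo] with u hu1 hu2
    rw [retMap, hu1, HF u hu2.1 hu2.2 i le_rfl]
  have htaff : Filter.Tendsto (fun u : ℝ => T^[i] z - (z - u)) (nhdsWithin z (Set.Iio z))
      (nhds (T^[i] z)) := by
    have : Filter.Tendsto (fun u : ℝ => T^[i] z - (z - u)) (nhds z) (nhds (T^[i] z - (z - z))) :=
      Filter.Tendsto.sub tendsto_const_nhds (Filter.Tendsto.sub tendsto_const_nhds tendsto_id)
    simpa using this.mono_left nhdsWithin_le_nhds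
  have hTib : T^[i] z = b := by
    have h4 : Filter.Tendsto (retMap T (Ico a b)) (nhdsWithin z (Set.Iio z)) (nhds (T^[i] z)) :=
      Filter.Tendsto.congr' (by filter_upwards [hevm] with u hu using hu.symm) htaff
    exact (tendsto_nhds_unique h4 Htm)
  obtain ⟨t, ht, hD⟩ := Pb z hzoo i hi1 hTib (fun r hr1 hr2 => h3 r hr1 (by omega))
  exact ⟨t, ht, hD⟩

/-- one-step backward translation of an orbit-free interval. -/
theorem Data.pre1 (hd : Data T N p σ) {δ' l : ℝ} (hδ' : 0 < δ') (hl0 : 0 ≤ l)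
    (hl1 : l + δ' ≤ 1)
    (hXfree : ∀ w, (∃ x, (x ∈ Discont T 0 1 ∨ x = 0) ∧ ∃ s, 1 ≤ s ∧ T^[s] x = w) →
      w ∉ Ioo l (l + δ')) :
    ∃ l', 0 ≤ l' ∧ l' + δ' ≤ 1 ∧
      (∀ w, (∃ x, (x ∈ Discont T 0 1 ∨ x = 0) ∧ ∃ s, 1 ≤ s ∧ T^[s] x = w) →
        w ∉ Ioo l' (l' + δ')) ∧
      (∀ u ∈ Ioo l' (l' + δ'), T u = u + (l - l')) := by
  classical
  set mid := l + δ' / 2 with hmid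
  have hmidIoo : mid ∈ Ioo l (l + δ') := ⟨by simp only [hmid]; linarith, by simp only [hmid]; linarith⟩
  have hmidI : mid ∈ Ico (0:ℝ) 1 := ⟨by simp only [hmid]; linarith, by simp only [hmid]; linarith⟩
  obtain ⟨e, heI, hTe⟩ := hd.hbij.surjOn hmidI
  set β := mid - e with hβ
  set A : Set ℝ := {y | y ∈ Ioo l (l + δ') ∧ (y - β ∈ Ico (0:ℝ) 1) ∧ T (y - β) = y} with hA
  -- auxiliary: preimages of points of the interval are never 0 nor discontinuities
  have hpre : ∀ y ∈ Ioo l (l + δ'), ∀ e' ∈ Ico (0:ℝ) 1, T e' = y → e' ∈ Ioo (0:ℝ) 1 ∧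
      e' ∉ Discont T 0 1 := by
    intro y hy e' he' hTe'
    have he'0 : e' ≠ 0 := by
      intro h
      apply hXfree y ⟨0, Or.inr rfl, 1, le_rfl, by rw [Function.iterate_one, ← h, hTe']⟩ hy
    have he'D : e' ∉ Discont T 0 1 := by
      intro hD
      exact hXfree y ⟨e', Or.inl hD, 1, le_rfl, by rw [Function.iterate_one, hTe']⟩ hy
    exact ⟨⟨lt_of_le_of_ne he'.1 (Ne.symm he'0), he'.2⟩, he'D⟩
  have hmidA : mid ∈ A := by
    refine ⟨hmidIoo, ?_, ?_⟩
    · have : mid - β = e := by simp only [hβ]; ring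
      rw [this]; exact heI
    · have : mid - β = e := by simp only [hβ]; ring
      rw [this]; exact hTe
  have hAopen : ∀ y ∈ A, ∃ r > 0, ∀ v ∈ Ioo l (l + δ'), |v - y| < r → v ∈ A := by
    intro y hy
    obtain ⟨hy1, hy2, hy3⟩ := hy
    obtain ⟨he'I, he'D⟩ := hpre y hy1 (y - β) hy2 hy3
    obtain ⟨δ2, hδ2, htr⟩ := hd.not_discont_trans he'I he'D
    refine ⟨min δ2 (min (y - β) (1 - (y - β))),
      lt_min hδ2 (lt_min he'I.1 (by linarith [he'I.2])), ?_⟩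
    intro v hv hvy
    have h1 : |v - β - (y - β)| < δ2 := by
      rw [show v - β - (y - β) = v - y by ring]
      exact lt_of_lt_of_le hvy (min_le_left _ _)
    have h2 := htr (v - β) h1
    rw [hy3] at h2
    have h3 : T (v - β) = v := by rw [h2]; ring
    have habs := abs_lt.mp hvy
    have hm1 := min_le_left (y - β) (1 - (y - β))
    have hm2 := min_le_right (y - β) (1 - (y - β))
    have hmr := min_le_right δ2 (min (y - β) (1 - (y - β)))
    refine ⟨hv, ⟨by linarith, by linarith⟩, h3⟩
  have hCopen : ∀ y ∈ Ioo l (l + δ'), y ∉ A →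
      ∃ r > 0, ∀ v ∈ Ioo l (l + δ'), |v - y| < r → v ∉ A := by
    intro y hy hyA
    have hyI : y ∈ Ico (0:ℝ) 1 := ⟨by linarith [hy.1], by linarith [hy.2]⟩
    obtain ⟨e'', he''I, hTe''⟩ := hd.hbij.surjOn hyI
    obtain ⟨he''Ioo, he''D⟩ := hpre y hy e'' he''I hTe''
    obtain ⟨δ2, hδ2, htr⟩ := hd.not_discont_trans he''Ioo he''D
    set β'' := y - e'' with hβ''
    have hβne : β'' ≠ β := by
      intro h
      apply hyA
      refine ⟨hy, ?_, ?_⟩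
      · rw [← h]
        have : y - β'' = e'' := by simp only [hβ'']; ring
        rw [this]; exact he''I
      · rw [← h]
        have : y - β'' = e'' := by simp only [hβ'']; ring
        rw [this]; exact hTe''
    refine ⟨min δ2 (min e'' (1 - e'')),
      lt_min hδ2 (lt_min he''Ioo.1 (by linarith [he''Ioo.2])), ?_⟩
    intro v hv hvy hvA
    obtain ⟨hv1, hv2, hv3⟩ := hvA
    have h1 : |v - β'' - e''| < δ2 := by
      rw [show v - β'' - e'' = v - y by simp only [hβ'']; ring]
      exact lt_of_lt_of_le hvy (min_le_left _ _)
    have h2 := htr (v - β'') h1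
    have h3 : T (v - β'') = v := by
      rw [h2, hTe'']
      simp only [hβ'']; ring
    have habs := abs_lt.mp hvy
    have hm1 := min_le_left e'' (1 - e'')
    have hm2 := min_le_right e'' (1 - e'')
    have hmr := min_le_right δ2 (min e'' (1 - e''))
    have hv''I : v - β'' ∈ Ico (0:ℝ) 1 := by
      constructor
      · have : v - β'' = e'' + (v - y) := by simp only [hβ'']; ring
        rw [this]; linarith
      · have : v - β'' = e'' + (v - y) := by simp only [hβ'']; ring
        rw [this]; linarith
    have := hd.hbij.injOn hv2 hv''I (by rw [hv3, h3])
    apply hβne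
    have : β = β'' := by linarith [this]
    exact this.symm
  -- connectedness: A is all of the interval
  have hAall : ∀ y ∈ Ioo l (l + δ'), y ∈ A := by
    by_contra hc
    push_neg at hc
    obtain ⟨y₀, hy₀, hy₀A⟩ := hc
    choose! rA hrA1 hrA2 using hAopen
    choose! rC hrC1 hrC2 using fun y (h : y ∈ Ioo l (l + δ') ∧ y ∉ A) => hCopen y h.1 h.2
    set U : Set ℝ := ⋃ (y : ℝ) (_ : y ∈ A), Metric.ball y (rA y) with hU
    set V : Set ℝ := ⋃ (y : ℝ) (_ : y ∈ Ioo l (l + δ') ∧ y ∉ A), Metric.ball y (rC y) with hV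
    have hUopen : IsOpen U := isOpen_iUnion (fun y => isOpen_iUnion (fun _ => Metric.isOpen_ball))
    have hVopen : IsOpen V := isOpen_iUnion (fun y => isOpen_iUnion (fun _ => Metric.isOpen_ball))
    have hcover : Ioo l (l + δ') ⊆ U ∪ V := by
      intro y hy
      by_cases hyA : y ∈ A
      · left
        apply Set.mem_biUnion hyA
        exact Metric.mem_ball_self (hrA1 y hyA)
      · right
        refine Set.mem_iUnion.mpr ⟨y, Set.mem_iUnion.mpr ⟨⟨hy, hyA⟩, ?_⟩⟩
        exact Metric.mem_ball_self (hrC1 y ⟨hy, hyA⟩)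
    have hUne : (Ioo l (l + δ') ∩ U).Nonempty := by
      refine ⟨mid, hmidIoo, ?_⟩
      apply Set.mem_biUnion hmidA
      exact Metric.mem_ball_self (hrA1 mid hmidA)
    have hVne : (Ioo l (l + δ') ∩ V).Nonempty := by
      refine ⟨y₀, hy₀, ?_⟩
      refine Set.mem_iUnion.mpr ⟨y₀, Set.mem_iUnion.mpr ⟨⟨hy₀, hy₀A⟩, ?_⟩⟩
      exact Metric.mem_ball_self (hrC1 y₀ ⟨hy₀, hy₀A⟩)
    obtain ⟨w, hwI, hwU, hwV⟩ := isPreconnected_Ioo U V hUopen hVopen hcover hUne hVne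
    obtain ⟨y1, hy1⟩ := Set.mem_iUnion.mp hwU
    obtain ⟨hy1A, hwb1⟩ := Set.mem_iUnion.mp hy1
    obtain ⟨y2, hy2⟩ := Set.mem_iUnion.mp hwV
    obtain ⟨hy2C, hwb2⟩ := Set.mem_iUnion.mp hy2
    have hw1 : w ∈ A := by
      apply hrA2 y1 hy1A w hwI
      rw [← Real.dist_eq]
      exact hwb1
    have hw2 : w ∉ A := by
      apply hrC2 y2 hy2C w hwI
      rw [← Real.dist_eq]
      exact hwb2
    exact hw2 hw1
  -- conclusion
  set l' := l - β with hl'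
  have hform : ∀ u ∈ Ioo l' (l' + δ'), T u = u + (l - l') := by
    intro u hu
    have hy : u + β ∈ Ioo l (l + δ') := by
      constructor
      · have := hu.1; simp only [hl'] at this; linarith
      · have := hu.2; simp only [hl'] at this; linarith
    obtain ⟨_, _, h3⟩ := hAall (u + β) hy
    rw [show u + β - β = u by ring] at h3
    rw [h3]
    simp only [hl']; ring
  have hIsub : ∀ u ∈ Ioo l' (l' + δ'), u ∈ Ico (0:ℝ) 1 := by
    intro u hu
    have hy : u + β ∈ Ioo l (l + δ') := by
      constructor
      · have := hu.1; simp only [hl'] at this; linarith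
      · have := hu.2; simp only [hl'] at this; linarith
    obtain ⟨_, h2, _⟩ := hAall (u + β) hy
    rw [show u + β - β = u by ring] at h2
    exact h2
  have hl'0 : 0 ≤ l' := by
    by_contra hc
    push_neg at hc
    have hmin : 0 < min δ' (-l') := lt_min hδ' (by linarith)
    have hu : l' + min δ' (-l') / 2 ∈ Ioo l' (l' + δ') := by
      constructor
      · linarith
      · have := min_le_left δ' (-l'); linarith
    have := (hIsub _ hu).1
    have h2 := min_le_right δ' (-l')
    linarith
  have hl'1 : l' + δ' ≤ 1 := by
    by_contra hc
    push_neg at hc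
    have hel : l' < 1 := by
      have : l' + δ' / 2 = e := by simp only [hl', hβ, hmid]; ring
      have he2 := heI.2
      linarith [heI.2, (by linarith : l' < l' + δ' / 2), this ▸ (heI.2)]
    have hu : (1 + (l' + δ')) / 2 ∈ Ioo l' (l' + δ') := ⟨by linarith, by linarith⟩
    have := (hIsub _ hu).2
    linarith
  refine ⟨l', hl'0, hl'1, ?_, hform⟩
  intro w hw hwI
  have hTw : T w = w + (l - l') := hform w hwI
  have hTwmem : T w ∈ Ioo l (l + δ') := by
    rw [hTw]
    have h1 := hwI.1
    have h2 := hwI.2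
    constructor
    · simp only [hl'] at h1 ⊢; linarith
    · simp only [hl'] at h2 ⊢; linarith
  obtain ⟨x, hx, s, hs1, hs2⟩ := hw
  apply hXfree (T w) ⟨x, hx, s + 1, by omega, by
    rw [Function.iterate_succ_apply', hs2]⟩ hTwmem

set_option maxHeartbeats 1600000 in
/-- the forward orbits of discontinuities (and of 0) are dense. -/
theorem Data.dense_X (hd : Data T N p σ)
    (hap : ∀ x ∈ Set.Ico (0 : ℝ) 1, ∀ n : ℕ, 1 ≤ n → T^[n] x ≠ x)
    {α β : ℝ} (hα : 0 ≤ α) (hαβ : α < β) (hβ : β ≤ 1) :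
    ∃ x, (x ∈ Discont T 0 1 ∨ x = 0) ∧ ∃ s, 1 ≤ s ∧ T^[s] x ∈ Ioo α β := by
  classical
  by_contra HX
  push_neg at HX
  set δ' := β - α with hδ'def
  have hδ' : 0 < δ' := by simp only [hδ'def]; linarith
  set Good : ℝ → Prop := fun l => 0 ≤ l ∧ l + δ' ≤ 1 ∧
    ∀ w, (∃ x, (x ∈ Discont T 0 1 ∨ x = 0) ∧ ∃ s, 1 ≤ s ∧ T^[s] x = w) →
      w ∉ Ioo l (l + δ') with hGooddef
  have g0 : Good α := by
    refine ⟨hα, by simp only [hδ'def]; linarith, ?_⟩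
    rintro w ⟨x, hx, s, hs1, hs2⟩ hw
    have : α + δ' = β := by simp only [hδ'def]; ring
    rw [this] at hw
    exact HX x hx s hs1 (hs2 ▸ hw)
  have step : ∀ l : {l : ℝ // Good l}, ∃ l' : {l : ℝ // Good l},
      ∀ u ∈ Ioo l'.val (l'.val + δ'), T u = u + (l.val - l'.val) := by
    rintro ⟨l, hl1, hl2, hl3⟩
    obtain ⟨l', h1, h2, h3, h4⟩ := hd.pre1 hδ' hl1 hl2 hl3
    exact ⟨⟨l', h1, h2, h3⟩, h4⟩
  choose F hF using step
  set seq : ℕ → {l : ℝ // Good l} := fun t => F^[t] ⟨α, g0⟩ with hseq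
  set lt : ℕ → ℝ := fun t => (seq t).val with hlt
  have hGood : ∀ t, Good (lt t) := fun t => (seq t).2
  have hstep : ∀ t, ∀ u ∈ Ioo (lt (t+1)) (lt (t+1) + δ'), T u = u + (lt t - lt (t+1)) := by
    intro t u hu
    have he : seq (t+1) = F (seq t) := Function.iterate_succ_apply' F t _
    have h := hF (seq t)
    simp only [hlt] at hu ⊢
    rw [he]
    exact h u (by rw [← he]; exact hu)
  have hlt01 : ∀ t, 0 ≤ lt t ∧ lt t + δ' ≤ 1 := fun t => ⟨(hGood t).1, (hGood t).2.1⟩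
  have hmem01 : ∀ t, ∀ u ∈ Ioo (lt t) (lt t + δ'), u ∈ Ico (0:ℝ) 1 := by
    intro t u hu
    obtain ⟨h1, h2⟩ := hlt01 t
    exact ⟨by linarith [hu.1], by linarith [hu.2]⟩
  have iterTrans : ∀ s t, ∀ u ∈ Ioo (lt (t+s)) (lt (t+s) + δ'),
      T^[s] u ∈ Ioo (lt t) (lt t + δ') ∧ T^[s] u = u + (lt t - lt (t+s)) := by
    intro s
    induction s with
    | zero =>
      intro t u hu
      exact ⟨hu, by simp⟩
    | succ s ih =>
      intro t u hu
      rw [← Nat.add_assoc t s 1] at hu ⊢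
      have h1 := hstep (t+s) u hu
      have hTu : T u ∈ Ioo (lt (t+s)) (lt (t+s) + δ') := by
        rw [h1]
        exact ⟨by linarith [hu.1], by linarith [hu.2]⟩
      obtain ⟨hm, hf2⟩ := ih t (T u) hTu
      constructor
      · rw [Function.iterate_succ_apply]; exact hm
      · rw [Function.iterate_succ_apply, hf2, h1]; ring
  have onto : ∀ s t, ∀ v ∈ Ioo (lt t) (lt t + δ'),
      (v - (lt t - lt (t+s))) ∈ Ioo (lt (t+s)) (lt (t+s) + δ') ∧
      T^[s] (v - (lt t - lt (t+s))) = v := by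
    intro s t v hv
    have hmem : v - (lt t - lt (t+s)) ∈ Ioo (lt (t+s)) (lt (t+s) + δ') :=
      ⟨by linarith [hv.1], by linarith [hv.2]⟩
    have h := (iterTrans s t _ hmem).2
    exact ⟨hmem, by rw [h]; ring⟩
  -- pigeonhole to find a pair of close levels
  set K := Nat.ceil (1/δ') with hK
  obtain ⟨t, t', htt', ht'K, hclose⟩ := pigeon lt δ' hδ' K
    (fun r _ => ⟨(hlt01 r).1, by linarith [(hlt01 r).2]⟩) le_rfl
  set k := t' - t with hk
  have hk1 : 1 ≤ k := by omega
  have htk : t + k = t' := by omega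
  set γ := lt t - lt t' with hγ
  have hγsm : |γ| < δ' := hclose
  have hγ0 : γ ≠ 0 := by
    intro h
    have heqi : lt t' = lt t := by simp only [hγ] at h; linarith
    set v := lt t + δ'/2 with hv
    have hvI : v ∈ Ioo (lt t) (lt t + δ') := ⟨by simp only [hv]; linarith, by simp only [hv]; linarith⟩
    obtain ⟨hm, ho⟩ := onto k t v hvI
    have : lt t - lt (t + k) = 0 := by rw [htk, heqi]; ring
    rw [this, sub_zero] at ho
    exact hap v (hmem01 t v hvI) k hk1 ho
  -- propagation: the levels slide by γ forever
  have claim : ∀ j : ℕ, lt (t + (j+1)*k) = lt (t + j*k) - γ := by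
    intro j
    induction j with
    | zero =>
      rw [show t + (0+1)*k = t' by omega, show t + 0*k = t by omega]
      simp only [hγ]; ring
    | succ j ih =>
      set A := t + j*k with hA
      set B := t + (j+1)*k with hB
      have hBA : B = A + k := by simp only [hA, hB]; ring
      have hCB : t + (j+2)*k = B + k := by simp only [hA, hB]; ring
      have hgap : lt B = lt A - γ := ih
      -- overlap point
      have habs := abs_lt.mp hγsm
      set v := (max (lt A) (lt B) + min (lt A) (lt B) + δ')/2 with hv
      have hminmax : max (lt A) (lt B) - min (lt A) (lt B) = |γ| := by
        rw [hgap]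
        rcases le_or_gt 0 γ with h | h
        · rw [max_eq_left (by linarith), min_eq_right (by linarith), abs_of_nonneg h]; ring
        · rw [max_eq_right (by linarith), min_eq_left (by linarith), abs_of_neg h]; ring
      have hvA : v ∈ Ioo (lt A) (lt A + δ') := by
        constructor
        · have h1 : lt A ≤ max (lt A) (lt B) := le_max_left _ _
          have h2 : min (lt A) (lt B) ≤ lt A := min_le_left _ _
          simp only [hv]
          nlinarith [abs_nonneg γ, hminmax]
        · have h1 : max (lt A) (lt B) ≤ lt A + |γ| := by
            rcases le_max_iff.mp (le_refl (max (lt A) (lt B))) with h | h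
            · exact le_trans h (by linarith [abs_nonneg γ])
            · rw [hgap] at h ⊢
              have := neg_abs_le γ
              linarith
          have h2 : lt A ≤ min (lt A) (lt B) + |γ| := by
            rcases min_le_iff.mp (le_refl (min (lt A) (lt B))) with h | h
            · linarith [abs_nonneg γ]
            · rw [hgap] at h ⊢
              have := le_abs_self γ
              linarith
          simp only [hv]
          nlinarith [hminmax]
      have hvB : v ∈ Ioo (lt B) (lt B + δ') := by
        constructor
        · have h1 : lt B ≤ max (lt A) (lt B) := le_max_right _ _
          have h2 : min (lt A) (lt B) ≤ lt B := min_le_right _ _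
          simp only [hv]
          nlinarith [hminmax, abs_nonneg γ]
        · have h1 : max (lt A) (lt B) ≤ lt B + |γ| := by
            rcases le_max_iff.mp (le_refl (max (lt A) (lt B))) with h | h
            · rw [hgap] at h ⊢
              have := le_abs_self (-γ)
              rw [abs_neg] at this
              linarith [le_abs_self γ, neg_abs_le γ]
            · linarith [abs_nonneg γ]
          have h2 : lt B ≤ min (lt A) (lt B) + |γ| := by
            rcases min_le_iff.mp (le_refl (min (lt A) (lt B))) with h | h
            · rw [hgap] at h ⊢
              linarith [le_abs_self γ, neg_abs_le γ]
            · linarith [abs_nonneg γ]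
          simp only [hv]
          nlinarith [hminmax]
      -- two preimages of v must coincide
      obtain ⟨hm1, ho1⟩ := onto k A v hvA
      obtain ⟨hm2, ho2⟩ := onto k B v hvB
      have hABn : A + k = B := by omega
      have hBCn : B + k = t + (j+1+1)*k := by simp only [hA, hB]; ring
      rw [hABn] at hm1 ho1
      rw [hBCn] at hm2 ho2
      have heq : v - (lt A - lt B) = v - (lt B - lt (t + (j+1+1)*k)) := by
        apply hd.injOn_iter k
        · exact hmem01 B _ hm1
        · exact hmem01 _ _ hm2
        · rw [ho1, ho2]
      have hg1 : lt A - lt B = γ := by rw [hgap]; ring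
      have h5 : lt A - lt B = lt B - lt (t + (j+1+1)*k) := by linarith [heq]
      linarith [h5, hg1]
  have total : ∀ j : ℕ, lt (t + j*k) = lt t - j*γ := by
    intro j
    induction j with
    | zero => simp
    | succ j ih =>
      rw [claim j, ih]
      push_cast
      ring
  -- contradiction: levels stay in [0,1]
  have hγabs : 0 < |γ| := abs_pos.mpr hγ0
  set j := Nat.ceil (2/|γ|) with hj
  have hj2 : 2/|γ| ≤ (j:ℝ) := Nat.le_ceil _
  have hjγ : 2 ≤ (j:ℝ) * |γ| := by
    rw [div_le_iff₀ hγabs] at hj2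
    linarith
  have h1 := total j
  have hb1 := hlt01 (t + j*k)
  have hb2 := hlt01 t
  have habs : |lt t - lt (t + j*k)| ≤ 1 := by
    rw [abs_le]
    constructor <;> [linarith [hb1.2, hb2.1]; linarith [hb1.1, hb2.2]]
  rw [h1] at habs
  rw [show lt t - (lt t - (j:ℝ)*γ) = (j:ℝ)*γ by ring] at habs
  rw [abs_mul, Nat.abs_cast] at habs
  linarith

end IETAux

open Set Filter Function IETAux in
set_option maxHeartbeats 1600000 in
/-- For an aperiodic right-continuous IET `T` of `[0,1)` and `ε > 0`, there is a
partition `0 = y 0 < y 1 < ⋯ < y M = 1` (`M > 1`) of mesh at most `ε` such that for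
each `j < M`, with `Δ = [y j, y (j+1))`: every discontinuity of the induced map `T_Δ`
is a `T`-cut on `Δ`; moreover, if `z` is the discontinuity of `T_Δ` whose left limit
of `T_Δ` at `z` is `y (j+1)` and `i` is the left limit of the return time at `z`,
then `T^r z` is a discontinuity of `T` for some `r < i`. -/
theorem partition_with_optimal_cuts (T : ℝ → ℝ) (hT : IsIET T)
    (haper : ∀ x ∈ Set.Ico (0 : ℝ) 1, ∀ n : ℕ, 1 ≤ n → T^[n] x ≠ x)
    (ε : ℝ) (hε : 0 < ε) :
    ∃ M : ℕ, 1 < M ∧ ∃ y : ℕ → ℝ, y 0 = 0 ∧ y M = 1 ∧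
      (∀ j < M, y j < y (j + 1)) ∧
      (∀ j < M, y (j + 1) - y j ≤ ε) ∧
      (∀ j < M,
        (∀ z ∈ Discont (retMap T (Set.Ico (y j) (y (j + 1)))) (y j) (y (j + 1)),
          IsTCut T (y j) (y (j + 1)) z) ∧
        (∀ z ∈ Discont (retMap T (Set.Ico (y j) (y (j + 1)))) (y j) (y (j + 1)),
          ∀ i : ℕ,
            Filter.Tendsto (retMap T (Set.Ico (y j) (y (j + 1))))
              (nhdsWithin z (Set.Iio z)) (nhds (y (j + 1))) →
            Filter.Tendsto (retTime T (Set.Ico (y j) (y (j + 1))))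
              (nhdsWithin z (Set.Iio z)) (nhds i) →
            ∃ r < i, T^[r] z ∈ Discont T 0 1)) := by
  classical
  obtain ⟨N, p, σ, hN, hp0, hpN, hplt, hbr, hbij⟩ := hT
  have hd : Data T N p σ := ⟨hN, hp0, hpN, hplt, hbr, hbij⟩
  -- grid size
  set K : ℕ := Nat.ceil (2/ε) + 2 with hKdef
  have hK2 : 2 ≤ K := by omega
  have hKpos : (0:ℝ) < K := by positivity
  have hKε : 2 / (K:ℝ) ≤ ε := by
    rw [div_le_iff₀ hKpos]
    have h1 : 2/ε ≤ (K:ℝ) := by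
      have := Nat.le_ceil (2/ε)
      have h2 : ((Nat.ceil (2/ε) : ℕ) : ℝ) ≤ K := by
        rw [hKdef]; push_cast; linarith
      linarith
    rw [div_le_iff₀ hε] at h1
    linarith
  -- a dense-orbit point in each grid cell
  have hcell : ∀ k : ℕ, k < K → ∃ x, (x ∈ Discont T 0 1 ∨ x = 0) ∧
      ∃ s, 1 ≤ s ∧ T^[s] x ∈ Ioo ((k:ℝ)/K) (((k:ℝ)+1)/K) := by
    intro k hk
    apply hd.dense_X haper
    · positivity
    · apply div_lt_div_of_pos_right _ hKpos
      linarith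
    · rw [div_le_one hKpos]
      have : (k:ℝ) + 1 ≤ K := by exact_mod_cast hk
      linarith
  choose! xf hxf sf hsf1 hsf2 using hcell
  set S : ℕ := (Finset.range K).sup sf with hSdef
  have hS : ∀ k, k < K → sf k ≤ S := fun k hk =>
    Finset.le_sup (Finset.mem_range.mpr hk)
  -- the orbit-segment predicate and finite point set
  set XP : ℝ → Prop := fun w => ∃ x, (x ∈ Discont T 0 1 ∨ x = 0) ∧
    ∃ s, 1 ≤ s ∧ s ≤ S ∧ T^[s] x = w with hXPdef
  set Dfin : Finset ℝ := ((Finset.range (N+1)).image p).filter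
    (fun q => q ∈ Discont T 0 1) with hDfin
  set B0 : Finset ℝ := insert (0:ℝ) Dfin with hB0
  set XS : Finset ℝ := (Finset.range S).biUnion
    (fun s => B0.image (fun x => T^[s+1] x)) with hXS
  have hB0mem : ∀ x, (x ∈ Discont T 0 1 ∨ x = 0) → x ∈ B0 := by
    intro x hx
    rcases hx with hx | rfl
    · apply Finset.mem_insert_of_mem
      rw [hDfin, Finset.mem_filter]
      obtain ⟨i, hi, hpi⟩ := hd.discont_subset hx
      exact ⟨Finset.mem_image.mpr ⟨i, Finset.mem_range.mpr (by omega), hpi⟩, hx⟩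
    · exact Finset.mem_insert_self _ _
  have hB0I : ∀ x ∈ B0, x ∈ Ico (0:ℝ) 1 ∧ (x ∈ Discont T 0 1 ∨ x = 0) := by
    intro x hx
    rcases Finset.mem_insert.mp hx with rfl | hx
    · exact ⟨⟨le_rfl, one_pos⟩, Or.inr rfl⟩
    · rw [hDfin, Finset.mem_filter] at hx
      exact ⟨hx.2.1, Or.inl hx.2⟩
  have hXPmem : ∀ w, XP w → w ∈ XS := by
    rintro w ⟨x, hx, s, hs1, hsS, rfl⟩
    rw [hXS, Finset.mem_biUnion]
    refine ⟨s - 1, Finset.mem_range.mpr (by omega), ?_⟩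
    rw [Finset.mem_image]
    exact ⟨x, hB0mem x hx, by rw [show s - 1 + 1 = s by omega]⟩
  have hXSmem : ∀ w ∈ XS, XP w ∧ w ∈ Ico (0:ℝ) 1 := by
    intro w hw
    rw [hXS, Finset.mem_biUnion] at hw
    obtain ⟨s, hs, hw⟩ := hw
    rw [Finset.mem_image] at hw
    obtain ⟨x, hxB, rfl⟩ := hw
    obtain ⟨hxI, hxD⟩ := hB0I x hxB
    refine ⟨⟨x, hxD, s+1, by omega, by
      have := Finset.mem_range.mp hs; omega, rfl⟩, hd.mem_iter hxI (s+1)⟩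
  set P : Finset ℝ := insert 0 (insert 1 XS) with hP
  have h0P : (0:ℝ) ∈ P := Finset.mem_insert_self _ _
  have h1P : (1:ℝ) ∈ P := Finset.mem_insert_of_mem (Finset.mem_insert_self _ _)
  have hPmem01 : ∀ w ∈ P, 0 ≤ w ∧ w ≤ 1 := by
    intro w hw
    rcases Finset.mem_insert.mp hw with rfl | hw
    · norm_num
    · rcases Finset.mem_insert.mp hw with rfl | hw
      · norm_num
      · have := (hXSmem w hw).2
        exact ⟨this.1, le_of_lt this.2⟩
  -- the sorted list of partition points
  set L : List ℝ := P.sort (· ≤ ·) with hL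
  have hlen : L.length = P.card := Finset.length_sort _
  have hsorted : L.SortedLT := Finset.sortedLT_sort P
  have hLmem : ∀ i : Fin L.length, L.get i ∈ P := by
    intro i
    have h1 : L.get i ∈ L := List.get_mem L i
    have h2 : L.get i ∈ Finset.sort P (· ≤ ·) := h1
    exact (Finset.mem_sort _).mp h2
  have hLsurj : ∀ w ∈ P, ∃ i : Fin L.length, L.get i = w := by
    intro w hw
    have h2 : w ∈ Finset.sort P (· ≤ ·) := (Finset.mem_sort _).mpr hw
    have : w ∈ L := h2
    obtain ⟨i, hi⟩ := List.mem_iff_get.mp this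
    exact ⟨i, hi⟩
  have hlenpos : 0 < L.length := by
    rw [hlen]
    exact Finset.card_pos.mpr ⟨0, h0P⟩
  set M : ℕ := L.length - 1 with hM
  have hM1 : M + 1 = L.length := by omega
  set y : ℕ → ℝ := fun j => L.getD j 1 with hy
  have hyget : ∀ j (h : j < L.length), y j = L.get ⟨j, h⟩ := by
    intro j h
    rw [hy]
    exact List.getD_eq_get (l := L) (d := 1) ⟨j, h⟩
  -- y is the sorted enumeration
  have hymono : ∀ j j', j < j' → j' < L.length → y j < y j' := by
    intro j j' hjj' hj'
    rw [hyget j (by omega), hyget j' hj']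
    exact hsorted.strictMono_get (by exact_mod_cast hjj')
  have hymem : ∀ j, j < L.length → y j ∈ P := by
    intro j h
    rw [hyget j h]
    exact hLmem _
  have hy0 : y 0 = 0 := by
    obtain ⟨i, hi⟩ := hLsurj 0 h0P
    have h1 : y 0 ≤ 0 := by
      rw [hyget 0 hlenpos, ← hi]
      exact hsorted.strictMono_get.monotone (by exact_mod_cast Nat.zero_le _)
    have h2 := (hPmem01 _ (hymem 0 hlenpos)).1
    linarith
  have hyM : y M = 1 := by
    obtain ⟨i, hi⟩ := hLsurj 1 h1P
    have h1 : 1 ≤ y M := by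
      rw [hyget M (by omega), ← hi]
      apply hsorted.strictMono_get.monotone
      have := i.2
      exact_mod_cast (by omega : (i:ℕ) ≤ M)
    have h2 := (hPmem01 _ (hymem M (by omega))).2
    linarith
  have hbetween : ∀ j, j + 1 < L.length → ∀ w ∈ P, ¬(y j < w ∧ w < y (j+1)) := by
    intro j hj w hw ⟨hw1, hw2⟩
    obtain ⟨i, hi⟩ := hLsurj w hw
    rcases le_or_gt (i : ℕ) j with h | h
    · have : w ≤ y j := by
        rw [hyget j (by omega), ← hi]
        exact hsorted.strictMono_get.monotone (by exact_mod_cast h)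
      linarith
    · have : y (j+1) ≤ w := by
        rw [hyget (j+1) hj, ← hi]
        exact hsorted.strictMono_get.monotone (by exact_mod_cast h)
      linarith
  -- mesh estimate
  have hgap : ∀ j, j < M → y (j+1) - y j ≤ ε := by
    intro j hj
    by_contra hc
    push_neg at hc
    set c := y j with hc'
    have hc0 : 0 ≤ c := (hPmem01 _ (hymem j (by omega))).1
    have hcb : y (j+1) ≤ 1 := (hPmem01 _ (hymem (j+1) (by omega))).2
    set k : ℕ := Nat.floor (c * K) + 1 with hk
    have hkval : (k:ℝ) = (Nat.floor (c*K) : ℝ) + 1 := by rw [hk]; push_cast; ring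
    have hkK : k < K := by
      have h1 : c < 1 - ε := by linarith
      have h3 : ε * K ≥ 2 := by
        rw [div_le_iff₀ hKpos] at hKε
        linarith
      have h2 : c * K < K - 2 := by nlinarith [mul_lt_mul_of_pos_right h1 hKpos]
      have h5 : (Nat.floor (c*K) : ℝ) ≤ c * K := Nat.floor_le (by positivity)
      have h6 : (k:ℝ) < (K:ℝ) := by rw [hkval]; linarith
      exact_mod_cast h6
    have hcellk := hsf2 k hkK
    set w := T^[sf k] (xf k) with hw
    have hwXP : XP w := ⟨xf k, hxf k hkK, sf k, hsf1 k hkK, hS k hkK, rfl⟩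
    have hwP : w ∈ P := Finset.mem_insert_of_mem (Finset.mem_insert_of_mem (hXPmem w hwXP))
    apply hbetween j (by omega) w hwP
    have hlow : c ≤ (k:ℝ)/K := by
      rw [le_div_iff₀ hKpos, hkval]
      have := Nat.lt_floor_add_one (c*K)
      linarith
    have hhigh : ((k:ℝ)+1)/K ≤ c + 2/K := by
      rw [div_le_iff₀ hKpos, hkval]
      have h5 : (Nat.floor (c*K) : ℝ) ≤ c * K := Nat.floor_le (by positivity)
      have h7 : (c + 2/K) * K = c * K + 2 := by
        rw [add_mul, div_mul_cancel₀ _ (ne_of_gt hKpos)]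
      rw [h7]
      linarith
    constructor
    · calc y j = c := rfl
      _ ≤ (k:ℝ)/K := hlow
      _ < w := hcellk.1
    · calc w < ((k:ℝ)+1)/K := hcellk.2
      _ ≤ c + 2/K := hhigh
      _ ≤ c + ε := by linarith
      _ < y (j+1) := by linarith
  -- M is at least 2
  have hM2 : 1 < M := by
    have h0K : 0 < K := by omega
    have hcell0 := hsf2 0 h0K
    set w := T^[sf 0] (xf 0) with hw
    have hwXP : XP w := ⟨xf 0, hxf 0 h0K, sf 0, hsf1 0 h0K, hS 0 h0K, rfl⟩
    have hwP : w ∈ P := Finset.mem_insert_of_mem (Finset.mem_insert_of_mem (hXPmem w hwXP))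
    have hw0 : 0 < w := by
      have := hcell0.1
      simp only [Nat.cast_zero, zero_div] at this
      linarith
    have hw1 : w < 1 := by
      have := hcell0.2
      have h2 : ((0:ℝ)+1)/K ≤ 1 := by
        rw [div_le_one hKpos]
        have h2' : (1:ℝ) ≤ (K:ℝ) := by exact_mod_cast (show 1 ≤ K by omega)
        linarith
      calc w < ((0:ℝ)+1)/K := by exact_mod_cast this
      _ ≤ 1 := h2
    have hsub : ({0, w, 1} : Finset ℝ) ⊆ P := by
      intro q hq
      rcases Finset.mem_insert.mp hq with rfl | hq
      · exact h0P
      · rcases Finset.mem_insert.mp hq with rfl | hq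
        · exact hwP
        · rw [Finset.mem_singleton] at hq
          subst hq
          exact h1P
    have hcard3 : ({0, w, 1} : Finset ℝ).card = 3 := by
      rw [Finset.card_insert_of_notMem, Finset.card_insert_of_notMem]
      · rfl
      · rw [Finset.mem_singleton]; linarith
      · intro h
        rcases Finset.mem_insert.mp h with h | h
        · linarith
        · rw [Finset.mem_singleton] at h; linarith
    have := Finset.card_le_card hsub
    rw [hcard3] at this
    rw [hM, hlen]
    omega
  refine ⟨M, hM2, y, hy0, hyM, ?_, hgap, ?_⟩
  · intro j hj
    exact hymono j (j+1) (by omega) (by omega)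
  · intro j hj
    set a := y j with ha'
    set b := y (j+1) with hb'
    have ha : 0 ≤ a := (hPmem01 _ (hymem j (by omega))).1
    have hb : b ≤ 1 := (hPmem01 _ (hymem (j+1) (by omega))).2
    have hab : a < b := hymono j (j+1) (by omega) (by omega)
    -- the key backward-orbit property of partition points
    have mkP : ∀ c : ℝ, (c = 0 ∨ c = 1 ∨ XP c) → ∀ z' ∈ Ioo a b, ∀ m : ℕ, 1 ≤ m →
        T^[m] z' = c → (∀ r, 1 ≤ r → r < m → T^[r] z' ∉ Ico a b) →
        ∃ t < m, T^[t] z' ∈ Discont T 0 1 := by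
      intro c hc z' hz' m hm1 hmc _hint
      have hz'I : z' ∈ Ico (0:ℝ) 1 :=
        ⟨le_trans ha (le_of_lt hz'.1), lt_of_lt_of_le hz'.2 hb⟩
      rcases hc with rfl | rfl | hXPc
      · -- c = 0
        refine ⟨m - 1, by omega, ?_⟩
        apply hd.zero_pre_discont haper (hd.mem_iter hz'I (m-1))
        have hit : T^[m] z' = T (T^[m-1] z') := by
          conv_lhs => rw [show m = m - 1 + 1 by omega]
          rw [Function.iterate_succ_apply']
        rw [← hit, hmc]
      · -- c = 1
        exfalso
        have := (hd.mem_iter hz'I m).2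
        rw [hmc] at this
        exact lt_irrefl _ this
      · obtain ⟨x, hx, s, hs1, hsS, hsx⟩ := hXPc
        have hxI : x ∈ Ico (0:ℝ) 1 := by
          rcases hx with hx | rfl
          · exact hx.1
          · exact ⟨le_rfl, one_pos⟩
        rcases le_or_gt s m with hsm | hsm
        · -- the orbit of z' passes through x
          have heq : T^[s] (T^[m-s] z') = T^[s] x := by
            have h1 := Function.iterate_add_apply T s (m-s) z'
            rw [show s + (m-s) = m by omega] at h1
            rw [← h1, hmc, hsx]
          have heq2 : T^[m-s] z' = x :=
            hd.injOn_iter s (hd.mem_iter hz'I (m-s)) hxI heq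
          rcases hx with hx | rfl
          · exact ⟨m - s, by omega, heq2 ▸ hx⟩
          · -- x = 0
            have hms : m - s ≠ 0 := by
              intro h
              rw [h] at heq2
              simp at heq2
              rw [heq2] at hz'
              have := hz'.1
              linarith
            refine ⟨m - s - 1, by omega, ?_⟩
            apply hd.zero_pre_discont haper (hd.mem_iter hz'I (m-s-1))
            have hit : T^[m-s] z' = T (T^[m-s-1] z') := by
              conv_lhs => rw [show m - s = m - s - 1 + 1 by omega]
              rw [Function.iterate_succ_apply']
            rw [← hit, heq2]
        · -- z' itself is an orbit point: contradiction with betweenness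
          exfalso
          have heq : T^[m] z' = T^[m] (T^[s-m] x) := by
            have h1 := Function.iterate_add_apply T m (s-m) x
            rw [show m + (s-m) = s by omega] at h1
            rw [hmc, ← hsx, h1]
          have heq2 : z' = T^[s-m] x :=
            hd.injOn_iter m hz'I (hd.mem_iter hxI (s-m)) heq
          have hz'XP : XP z' := ⟨x, hx, s - m, by omega, by omega, heq2.symm⟩
          have hz'P : z' ∈ P :=
            Finset.mem_insert_of_mem (Finset.mem_insert_of_mem (hXPmem z' hz'XP))
          exact hbetween j (by omega) z' hz'P ⟨hz'.1, hz'.2⟩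
    have HA : a = 0 ∨ a = 1 ∨ XP a := by
      have := hymem j (by omega)
      rw [hP] at this
      rcases Finset.mem_insert.mp this with h | h
      · exact Or.inl h
      · rcases Finset.mem_insert.mp h with h | h
        · exact Or.inr (Or.inl h)
        · exact Or.inr (Or.inr (hXSmem _ h).1)
    have HB : b = 0 ∨ b = 1 ∨ XP b := by
      have := hymem (j+1) (by omega)
      rw [hP] at this
      rcases Finset.mem_insert.mp this with h | h
      · exact Or.inl h
      · rcases Finset.mem_insert.mp h with h | h
        · exact Or.inr (Or.inl h)
        · exact Or.inr (Or.inr (hXSmem _ h).1)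
    exact hd.cell ha hab hb (mkP a HA) (mkP b HB)
end

section
/- Let 0 < ε ≤ 1/4, let y₀ < b be real numbers, and let F : [y₀, b) → ℝ be a continuous, convex, strictly increasing function with F(y₀) = ε and lim_{x→b⁻} F(x) = +∞. Then the Lebesgue measure of the set {x ∈ (y₀, b) : inf_{a∈ℤ} |F(x) − a| > ε} is at least (b − y₀)/2. -/
/-- Convexity/level-spacing estimate: if `F : [y₀, b) → ℝ` is continuous, convex,
strictly increasing, with `F y₀ = ε` and `F → +∞` at `b⁻`, and `0 < ε ≤ 1/4`, then the
set of `x ∈ (y₀, b)` where `F x` is at distance more than `ε` from every integer has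
Lebesgue measure at least `(b - y₀) / 2`. -/
theorem convexity_level_spacing (ε y₀ b : ℝ) (hε : 0 < ε) (hε' : ε ≤ 1 / 4)
    (hyb : y₀ < b) (F : ℝ → ℝ)
    (hcont : ContinuousOn F (Set.Ico y₀ b))
    (hconv : ConvexOn ℝ (Set.Ico y₀ b) F)
    (hmono : StrictMonoOn F (Set.Ico y₀ b))
    (hF0 : F y₀ = ε)
    (htop : Filter.Tendsto F (nhdsWithin b (Set.Iio b)) Filter.atTop) :
    ENNReal.ofReal ((b - y₀) / 2) ≤
      MeasureTheory.volume {x ∈ Set.Ioo y₀ b | ∀ a : ℤ, ε < |F x - (a : ℝ)|} := by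
  classical
  set S := {x ∈ Set.Ioo y₀ b | ∀ a : ℤ, ε < |F x - (a : ℝ)|} with hS
  have hy₀mem : y₀ ∈ Set.Ico y₀ b := ⟨le_refl _, hyb⟩
  -- existence of preimages
  have hex : ∀ v : ℝ, ∃ x, x ∈ Set.Ico y₀ b ∧ (ε ≤ v → F x = v) := by
    intro v
    rcases le_or_gt ε v with hv | hv
    · have h1 : ∀ᶠ x in nhdsWithin b (Set.Iio b), v ≤ F x :=
        htop.eventually (Filter.eventually_ge_atTop v)
      have h2 : Set.Ioo y₀ b ∈ nhdsWithin b (Set.Iio b) := Ioo_mem_nhdsLT hyb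
      obtain ⟨x', hx'1, hx'2⟩ :=
        (h1.and (Filter.eventually_of_mem h2 (fun x hx => hx))).exists
      have hsub : Set.Icc y₀ x' ⊆ Set.Ico y₀ b := fun z hz =>
        ⟨hz.1, lt_of_le_of_lt hz.2 hx'2.2⟩
      have hIVT := intermediate_value_Icc (le_of_lt hx'2.1) (hcont.mono hsub)
      have hv' : v ∈ Set.Icc (F y₀) (F x') := ⟨by rw [hF0]; exact hv, hx'1⟩
      obtain ⟨x, hx, hfx⟩ := hIVT hv'
      exact ⟨x, hsub hx, fun _ => hfx⟩
    · exact ⟨y₀, hy₀mem, fun h => absurd h (not_le.2 hv)⟩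
  choose φ hφmem hφval using hex
  have hφval' : ∀ v, ε ≤ v → F (φ v) = v := fun v hv => hφval v hv
  have hφge : ∀ v, y₀ ≤ φ v := fun v => (hφmem v).1
  have hφlt : ∀ v, φ v < b := fun v => (hφmem v).2
  -- monotonicity of φ
  have hφmono : ∀ v w, ε ≤ v → v ≤ w → φ v ≤ φ w := by
    intro v w hv hvw
    by_contra h
    push_neg at h
    have := hmono (hφmem w) (hφmem v) h
    rw [hφval' v hv, hφval' w (hv.trans hvw)] at this
    exact absurd hvw (not_le.2 this)
  have hφsmono : ∀ v w, ε ≤ v → v < w → φ v < φ w := by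
    intro v w hv hvw
    rcases lt_or_ge (φ v) (φ w) with h | h
    · exact h
    · exfalso
      have := hmono.monotoneOn (hφmem w) (hφmem v) h
      rw [hφval' v hv, hφval' w (hv.trans hvw.le)] at this
      exact absurd hvw (not_lt.2 this)
  have hφε : φ ε = y₀ := by
    apply hmono.injOn (hφmem ε) hy₀mem
    rw [hφval' ε le_rfl, hF0]
  -- convexity slope inequality for the inverse
  have hslope : ∀ v1 v2 v3 v4 : ℝ, ε ≤ v1 → v1 < v2 → v2 ≤ v3 → v3 < v4 →
      (v2 - v1) * (φ v4 - φ v3) ≤ (v4 - v3) * (φ v2 - φ v1) := by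
    intro v1 v2 v3 v4 h1 h12 h23 h34
    have hm1 := hφmem v1
    have hm2 := hφmem v2
    have hm3 := hφmem v3
    have hm4 := hφmem v4
    have hx12 : φ v1 < φ v2 := hφsmono _ _ h1 h12
    have hx34 : φ v3 < φ v4 := hφsmono _ _ (h1.trans (h12.le.trans h23)) h34
    have hx23 : φ v2 ≤ φ v3 := hφmono _ _ (h1.trans h12.le) h23
    have hsl : (F (φ v2) - F (φ v1)) / (φ v2 - φ v1) ≤
        (F (φ v4) - F (φ v3)) / (φ v4 - φ v3) := by
      rcases eq_or_lt_of_le hx23 with heq | hlt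
      · rw [← heq]
        exact hconv.slope_mono_adjacent hm1 hm4 hx12 (heq ▸ hx34)
      · exact le_trans (hconv.slope_mono_adjacent hm1 hm3 hx12 hlt)
          (hconv.slope_mono_adjacent hm2 hm4 hlt hx34)
    rw [hφval' v1 h1, hφval' v2 (h1.trans h12.le),
      hφval' v3 (h1.trans (h12.le.trans h23)),
      hφval' v4 (h1.trans (h12.le.trans (h23.trans h34.le)))] at hsl
    rw [div_le_div_iff₀ (by linarith) (by linarith)] at hsl
    linarith
  -- lengths of good and bad intervals
  set g : ℕ → ℝ := fun n => φ ((n : ℝ) + 1 - ε) - φ ((n : ℝ) + ε) with hg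
  set f : ℕ → ℝ := fun n => φ ((n : ℝ) + ε) with hf
  have hεn : ∀ n : ℕ, ε ≤ (n : ℝ) + ε := fun n => by
    have : (0:ℝ) ≤ n := Nat.cast_nonneg n
    linarith
  have hgpos : ∀ n : ℕ, 0 < g n := by
    intro n
    have := hφsmono ((n : ℝ) + ε) ((n : ℝ) + 1 - ε) (hεn n) (by linarith)
    simpa [hg] using sub_pos.2 this
  have hbad_le : ∀ n : ℕ, φ ((n : ℝ) + 1 + ε) - φ ((n : ℝ) + 1 - ε) ≤ g n := by
    intro n
    have hkey := hslope ((n : ℝ) + ε) ((n : ℝ) + 1 - ε) ((n : ℝ) + 1 - ε)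
      ((n : ℝ) + 1 + ε) (hεn n) (by linarith) le_rfl (by linarith)
    have hb0 : 0 ≤ φ ((n : ℝ) + 1 + ε) - φ ((n : ℝ) + 1 - ε) :=
      sub_nonneg.2 (hφmono _ _ (by have : (0:ℝ) ≤ n := Nat.cast_nonneg n; linarith)
        (by linarith))
    have hgp := hgpos n
    simp only [hg] at hgp ⊢
    nlinarith
  -- telescoping bound
  have htel : ∀ N : ℕ, f N - y₀ ≤ 2 * ∑ a ∈ Finset.range N, g a := by
    intro N
    have hsum : ∑ a ∈ Finset.range N, (f (a + 1) - f a) = f N - f 0 :=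
      Finset.sum_range_sub f N
    have hf0 : f 0 = y₀ := by simp [hf, hφε]
    have hterm : ∀ a : ℕ, f (a + 1) - f a ≤ 2 * g a := by
      intro a
      have h1 : f (a + 1) - f a =
          (φ ((a : ℝ) + 1 + ε) - φ ((a : ℝ) + 1 - ε)) + g a := by
        simp only [hf, hg]
        push_cast
        ring
      have := hbad_le a
      linarith
    calc f N - y₀ = ∑ a ∈ Finset.range N, (f (a + 1) - f a) := by rw [hsum, hf0]
      _ ≤ ∑ a ∈ Finset.range N, 2 * g a := Finset.sum_le_sum fun a _ => hterm a
      _ = 2 * ∑ a ∈ Finset.range N, g a := by rw [Finset.mul_sum]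
  -- good intervals are in S
  have hsubS : ∀ n : ℕ, Set.Ioo (φ ((n : ℝ) + ε)) (φ ((n : ℝ) + 1 - ε)) ⊆ S := by
    intro n x hx
    have hxI : x ∈ Set.Ico y₀ b :=
      ⟨(hφge _).trans hx.1.le, hx.2.trans (hφlt _)⟩
    have hF1 : (n : ℝ) + ε < F x := by
      have := hmono (hφmem ((n : ℝ) + ε)) hxI hx.1
      rwa [hφval' _ (hεn n)] at this
    have hF2 : F x < (n : ℝ) + 1 - ε := by
      have := hmono hxI (hφmem ((n : ℝ) + 1 - ε)) hx.2
      rwa [hφval' _ (by have : (0:ℝ) ≤ n := Nat.cast_nonneg n; linarith)] at this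
    refine ⟨⟨lt_of_le_of_lt (hφge _) hx.1, hx.2.trans (hφlt _)⟩, ?_⟩
    intro k
    rcases le_or_gt (k : ℝ) (n : ℝ) with hk | hk
    · rw [abs_of_pos (by linarith)]
      linarith
    · have hk' : (n : ℝ) + 1 ≤ (k : ℝ) := by
        have : (n : ℤ) < k := by exact_mod_cast hk
        have : (n : ℤ) + 1 ≤ k := this
        exact_mod_cast this
      rw [abs_of_neg (by linarith)]
      linarith
  -- measure of the finite union of good intervals
  have hmeas : ∀ N : ℕ, ENNReal.ofReal ((f N - y₀) / 2) ≤ MeasureTheory.volume S := by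
    intro N
    have hdisj : (↑(Finset.range N) : Set ℕ).PairwiseDisjoint
        (fun n : ℕ => Set.Ioo (φ ((n : ℝ) + ε)) (φ ((n : ℝ) + 1 - ε))) := by
      have key : ∀ m n : ℕ, m < n →
          Disjoint (Set.Ioo (φ ((m : ℝ) + ε)) (φ ((m : ℝ) + 1 - ε)))
            (Set.Ioo (φ ((n : ℝ) + ε)) (φ ((n : ℝ) + 1 - ε))) := by
        intro m n hmn
        apply Set.disjoint_left.2
        intro x hx1 hx2
        have hle : φ ((m : ℝ) + 1 - ε) ≤ φ ((n : ℝ) + ε) := by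
          apply hφmono _ _ (by have : (0:ℝ) ≤ m := Nat.cast_nonneg m; linarith)
          have : (m : ℝ) + 1 ≤ n := by exact_mod_cast hmn
          linarith
        exact absurd (hx1.2.trans_le hle) (not_lt.2 hx2.1.le)
      intro m _ n _ hmn
      rcases lt_or_gt_of_ne hmn with h | h
      · exact key m n h
      · exact (key n m h).symm
    have hunion : MeasureTheory.volume
        (⋃ n ∈ Finset.range N, Set.Ioo (φ ((n : ℝ) + ε)) (φ ((n : ℝ) + 1 - ε)))
        = ∑ n ∈ Finset.range N, ENNReal.ofReal (g n) := by
      rw [MeasureTheory.measure_biUnion_finset hdisj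
        (fun n _ => measurableSet_Ioo)]
      congr 1
      ext n
      rw [Real.volume_Ioo]
    have hsub : (⋃ n ∈ Finset.range N,
        Set.Ioo (φ ((n : ℝ) + ε)) (φ ((n : ℝ) + 1 - ε))) ⊆ S := by
      intro x hx
      simp only [Set.mem_iUnion] at hx
      obtain ⟨n, _, hn⟩ := hx
      exact hsubS n hn
    calc ENNReal.ofReal ((f N - y₀) / 2)
        ≤ ENNReal.ofReal (∑ n ∈ Finset.range N, g n) := by
          apply ENNReal.ofReal_le_ofReal
          have := htel N
          linarith
      _ = ∑ n ∈ Finset.range N, ENNReal.ofReal (g n) :=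
          ENNReal.ofReal_sum_of_nonneg (fun n _ => (hgpos n).le)
      _ = MeasureTheory.volume
          (⋃ n ∈ Finset.range N, Set.Ioo (φ ((n : ℝ) + ε)) (φ ((n : ℝ) + 1 - ε))) :=
          hunion.symm
      _ ≤ MeasureTheory.volume S := MeasureTheory.measure_mono hsub
  -- f N → b
  have htend : Filter.Tendsto f Filter.atTop (nhds b) := by
    rw [tendsto_order]
    constructor
    · intro c hc
      rcases lt_or_ge c y₀ with h | h
      · exact Filter.Eventually.of_forall fun N => lt_of_lt_of_le h (hφge _)
      · have hcI : c ∈ Set.Ico y₀ b := ⟨h, hc⟩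
        have : ∀ᶠ N : ℕ in Filter.atTop, F c < (N : ℝ) + ε := by
          have h1 : Filter.Tendsto (fun N : ℕ => (N : ℝ)) Filter.atTop Filter.atTop :=
            tendsto_natCast_atTop_atTop
          filter_upwards [h1.eventually_gt_atTop (F c)] with N hN
          linarith
        filter_upwards [this] with N hN
        by_contra hcon
        push_neg at hcon
        have := hmono.monotoneOn (hφmem ((N : ℝ) + ε)) hcI hcon
        rw [hφval' _ (hεn N)] at this
        exact absurd hN (not_lt.2 this)
    · intro c hc
      exact Filter.Eventually.of_forall fun N => (hφlt _).trans hc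
  have htend2 : Filter.Tendsto (fun N : ℕ => ENNReal.ofReal ((f N - y₀) / 2))
      Filter.atTop (nhds (ENNReal.ofReal ((b - y₀) / 2))) := by
    apply ENNReal.tendsto_ofReal
    exact (htend.sub_const y₀).div_const 2
  exact le_of_tendsto htend2 (Filter.Eventually.of_forall hmeas)
end

section
/- Let f : ℝ² → ℝ be real-analytic on a neighborhood of a suitable compact region, let a(x) < b(x) be real-analytic functions defined in a neighborhood of 0, and let n > 0 be an integer. Then there exist h₀ > 0 and a real-analytic function G defined on a neighborhood of [0, h₀^{1/n}] such that for every h ∈ (0, h₀), ∫∫_{{(x,y) : 0 < x < h^{1/n}, a(x) < y < b(x)}} f(x,y) dx dy = G(h^{1/n}) − G(0). In particular this integral is given on (0, h₀) by a convergent power series in h^{1/n}. -/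
open Set Filter MeasureTheory intervalIntegral
open scoped Topology ENNReal NNReal

noncomputable section

namespace IntStrip

def eb : Fin 2 → ℝ × ℝ := ![(1,0),(0,1)]

def coordR : Fin 2 → (ℝ × ℝ →L[ℝ] ℝ) := ![ContinuousLinearMap.fst ℝ ℝ ℝ, ContinuousLinearMap.snd ℝ ℝ ℝ]

def projC : Fin 2 → (ℂ × ℂ →L[ℂ] ℂ) := ![ContinuousLinearMap.fst ℂ ℂ ℂ, ContinuousLinearMap.snd ℂ ℂ ℂ]

lemma norm_projC_le (j : Fin 2) : ‖projC j‖ ≤ 1 := by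
  fin_cases j
  · exact ContinuousLinearMap.norm_fst_le ℂ ℂ ℂ
  · exact ContinuousLinearMap.norm_snd_le ℂ ℂ ℂ

lemma norm_eb (j : Fin 2) : ‖eb j‖ = 1 := by
  fin_cases j <;> simp [eb, Prod.norm_def]

/-- Complexification of a continuous multilinear map on `(ℝ × ℝ)^n`. -/
def cmm {n : ℕ} (m : ContinuousMultilinearMap ℝ (fun _ : Fin n => ℝ × ℝ) ℝ) :
    ContinuousMultilinearMap ℂ (fun _ : Fin n => ℂ × ℂ) ℂ :=
  ∑ σ : Fin n → Fin 2,
    (ContinuousMultilinearMap.mkPiRing ℂ (Fin n)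
        ((m (fun i => eb (σ i)) : ℝ) : ℂ)).compContinuousLinearMap (fun i => projC (σ i))

lemma norm_cmm_le {n : ℕ} (m : ContinuousMultilinearMap ℝ (fun _ : Fin n => ℝ × ℝ) ℝ) :
    ‖cmm m‖ ≤ 2 ^ n * ‖m‖ := by
  refine (norm_sum_le _ _).trans ?_
  have : ∀ σ : Fin n → Fin 2,
      ‖(ContinuousMultilinearMap.mkPiRing ℂ (Fin n)
        ((m (fun i => eb (σ i)) : ℝ) : ℂ)).compContinuousLinearMap (fun i => projC (σ i))‖
        ≤ ‖m‖ := by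
    intro σ
    refine (ContinuousMultilinearMap.norm_compContinuousLinearMap_le _ _).trans ?_
    have h1 : ‖ContinuousMultilinearMap.mkPiRing ℂ (Fin n)
        ((m (fun i => eb (σ i)) : ℝ) : ℂ)‖ ≤ ‖m‖ := by
      rw [ContinuousMultilinearMap.norm_mkPiRing, Complex.norm_real]
      calc ‖m (fun i => eb (σ i))‖ ≤ ‖m‖ * ∏ i, ‖eb (σ i)‖ := m.le_opNorm _
      _ = ‖m‖ := by simp [norm_eb]
    calc ‖ContinuousMultilinearMap.mkPiRing ℂ (Fin n) ((m (fun i => eb (σ i)) : ℝ) : ℂ)‖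
          * ∏ i, ‖projC (σ i)‖
        ≤ ‖m‖ * 1 := by
          refine mul_le_mul h1 ?_ (by positivity) (norm_nonneg _)
          calc ∏ i, ‖projC (σ i)‖ ≤ ∏ _i : Fin n, 1 :=
            Finset.prod_le_prod (fun _ _ => norm_nonneg _) (fun i _ => norm_projC_le _)
          _ = 1 := by simp
      _ = ‖m‖ := mul_one _
  calc ∑ σ : Fin n → Fin 2, ‖_‖ ≤ ∑ _σ : Fin n → Fin 2, ‖m‖ := Finset.sum_le_sum (fun σ _ => this σ)
    _ = 2 ^ n * ‖m‖ := by simp [Finset.card_univ, mul_comm]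

lemma cmm_apply_real {n : ℕ} (m : ContinuousMultilinearMap ℝ (fun _ : Fin n => ℝ × ℝ) ℝ)
    (v : Fin n → ℝ × ℝ) :
    cmm m (fun i => (((v i).1 : ℂ), ((v i).2 : ℂ))) = ((m v : ℝ) : ℂ) := by
  have hv : ∀ i, v i = ∑ j : Fin 2, (coordR j (v i)) • eb j := by
    intro i
    simp [coordR, eb, Fin.sum_univ_two, Prod.ext_iff]
  have hexp : m v = ∑ σ : Fin n → Fin 2, (∏ i, coordR (σ i) (v i)) • m (fun i => eb (σ i)) := by
    conv_lhs => rw [show v = fun i => ∑ j : Fin 2, (coordR j (v i)) • eb j from funext hv]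
    rw [show (fun i => ∑ j : Fin 2, (coordR j (v i)) • eb j)
        = fun i => ∑ j ∈ (Finset.univ : Finset (Fin 2)), (coordR j (v i)) • eb j from rfl]
    rw [m.map_sum_finset (fun i j => (coordR j (v i)) • eb j) (fun _ => Finset.univ)]
    rw [Fintype.piFinset_univ]
    refine Finset.sum_congr rfl (fun σ _ => ?_)
    exact m.map_smul_univ (fun i => coordR (σ i) (v i)) (fun i => eb (σ i))
  rw [hexp]
  rw [cmm, ContinuousMultilinearMap.sum_apply]
  push_cast
  refine Finset.sum_congr rfl (fun σ _ => ?_)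
  rw [ContinuousMultilinearMap.compContinuousLinearMap_apply,
    ContinuousMultilinearMap.mkPiRing_apply]
  have key : ∀ (j : Fin 2) (w : ℝ × ℝ), projC j (((w.1 : ℂ)), ((w.2 : ℂ))) = ((coordR j w : ℝ) : ℂ) := by
    intro j w
    fin_cases j <;> simp [projC, coordR]
  simp only [key, smul_eq_mul, ← Complex.ofReal_prod, ← Complex.ofReal_mul]



/-- Complexification of a formal multilinear series on ℝ × ℝ. -/
def cps (P : FormalMultilinearSeries ℝ (ℝ × ℝ) ℝ) : FormalMultilinearSeries ℂ (ℂ × ℂ) ℂ :=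
  fun n => cmm (P n)

theorem exists_complex_extension {F : ℝ × ℝ → ℝ} {x₀ s₀ : ℝ} (hF : AnalyticAt ℝ F (x₀, s₀)) :
    ∃ ρ > (0:ℝ), ∃ Ψ : ℂ × ℂ → ℂ,
      AnalyticOnNhd ℂ Ψ (Metric.ball ((x₀ : ℂ), (s₀ : ℂ)) ρ) ∧
      ∀ q : ℝ × ℝ, dist q (x₀, s₀) < ρ → Ψ ((q.1 : ℂ), (q.2 : ℂ)) = ((F q : ℝ) : ℂ) := by
  set p : ℝ × ℝ := (x₀, s₀) with hp
  have hF' : AnalyticAt ℝ F p := hF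
  obtain ⟨P, r, hr⟩ := hF'
  obtain ⟨r', hr'0, hr'r⟩ := ENNReal.lt_iff_exists_nnreal_btwn.1 hr.r_pos
  rw [ENNReal.coe_pos] at hr'0
  obtain ⟨C, hC0, hC⟩ := P.norm_mul_pow_le_of_lt_radius (lt_of_lt_of_le hr'r hr.r_le)
  set Q : FormalMultilinearSeries ℂ (ℂ × ℂ) ℂ := cps P with hQdef
  have hQr : ((r'/2 : ℝ≥0) : ℝ≥0∞) ≤ Q.radius := by
    refine Q.le_radius_of_bound C (fun n => ?_)
    have h1 : ‖Q n‖ ≤ 2 ^ n * ‖P n‖ := norm_cmm_le (P n)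
    have h2 : ((r'/2 : ℝ≥0) : ℝ) ^ n = (r' : ℝ) ^ n / 2 ^ n := by
      push_cast
      rw [div_pow]
    calc ‖Q n‖ * ((r'/2 : ℝ≥0) : ℝ) ^ n ≤ (2 ^ n * ‖P n‖) * ((r' : ℝ) ^ n / 2 ^ n) := by
          rw [h2]; exact mul_le_mul_of_nonneg_right h1 (by positivity)
      _ = ‖P n‖ * (r' : ℝ) ^ n := by field_simp
      _ ≤ C := hC n
  have hQpos : 0 < Q.radius := lt_of_lt_of_le (by exact_mod_cast half_pos hr'0) hQr
  have hball := Q.hasFPowerSeriesOnBall hQpos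
  set pC : ℂ × ℂ := ((p.1 : ℂ), (p.2 : ℂ)) with hpC
  refine ⟨(r' : ℝ)/2, by positivity, fun z => Q.sum (z - pC), ?_, ?_⟩
  · intro z hz
    have hz' : z - pC ∈ Metric.eball (0 : ℂ × ℂ) Q.radius := by
      rw [EMetric.mem_ball, edist_zero_right]
      refine lt_of_lt_of_le ?_ hQr
      rw [← ENNReal.coe_lt_coe] at *
      have : ‖z - pC‖ < (r' : ℝ)/2 := by
        rw [Metric.mem_ball, dist_eq_norm] at hz; exact hz
      rw [show ((r'/2 : ℝ≥0) : ℝ≥0∞) = ((r'/2 : ℝ≥0) : ℝ≥0) from rfl]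
      exact_mod_cast (by exact_mod_cast this : ‖z - pC‖₊ < (r'/2 : ℝ≥0))
    have h1 : AnalyticAt ℂ Q.sum (z - pC) := hball.analyticAt_of_mem (by simpa using hz')
    have h2 : AnalyticAt ℂ (fun w : ℂ × ℂ => w - pC) z := (analyticAt_id).sub analyticAt_const
    exact AnalyticAt.comp (f := fun w : ℂ × ℂ => w - pC) h1 h2
  · intro q hq
    set v : ℝ × ℝ := q - p with hv
    have hvn : ‖v‖ < (r' : ℝ)/2 := by rw [hv, ← dist_eq_norm]; exact hq
    set vC : ℂ × ℂ := ((v.1 : ℂ), (v.2 : ℂ)) with hvC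
    have hvCn : ‖vC‖ = ‖v‖ := by
      rw [Prod.norm_def, Prod.norm_def]; simp [hvC, Complex.norm_real]
    have hmem1 : v ∈ Metric.eball (0 : ℝ × ℝ) r := by
      rw [EMetric.mem_ball, edist_zero_right]
      refine lt_trans ?_ hr'r
      exact_mod_cast (lt_trans hvn (by simpa using half_lt_self (by exact_mod_cast hr'0 : (0:ℝ) < r')) : ‖v‖ < (r':ℝ))
    have hsum_real := hr.hasSum hmem1
    have hsum_C : HasSum (fun n => ((P n (fun _ => v) : ℝ) : ℂ)) ((F (p + v) : ℝ) : ℂ) :=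
      Complex.ofRealCLM.hasSum hsum_real
    have hterm : ∀ n, ((P n (fun _ => v) : ℝ) : ℂ) = Q n (fun _ => vC) := by
      intro n
      exact (cmm_apply_real (P n) (fun _ => v)).symm
    rw [funext hterm] at hsum_C
    have hmem2 : vC ∈ Metric.eball (0 : ℂ × ℂ) Q.radius := by
      rw [EMetric.mem_ball, edist_zero_right]
      refine lt_of_lt_of_le ?_ hQr
      have : ‖vC‖₊ < (r'/2 : ℝ≥0) := by
        rw [← NNReal.coe_lt_coe]
        rw [coe_nnnorm, hvCn]
        simpa using hvn
      exact_mod_cast this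
    have hsum_Q := hball.hasSum (by simpa using hmem2)
    simp only [zero_add] at hsum_Q
    have hQv : Q.sum vC = ((F (p + v) : ℝ) : ℂ) := hsum_Q.unique hsum_C
    have hqv : ((q.1 : ℂ), (q.2 : ℂ)) - pC = vC := by
      simp [hpC, hvC, hv, Prod.ext_iff]
    show Q.sum (((q.1 : ℂ), (q.2 : ℂ)) - pC) = _
    rw [hqv, hQv, hv]
    norm_num


theorem analyticAt_piece {F : ℝ × ℝ → ℝ} {x₀ s₀ ρ : ℝ} {Ψ : ℂ × ℂ → ℂ} (hρ : 0 < ρ)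
    (hΨ : AnalyticOnNhd ℂ Ψ (Metric.ball ((x₀ : ℂ), (s₀ : ℂ)) ρ))
    (hreal : ∀ q : ℝ × ℝ, dist q (x₀, s₀) < ρ → Ψ ((q.1 : ℂ), (q.2 : ℂ)) = ((F q : ℝ) : ℂ))
    {c d : ℝ} (hcd : c ≤ d) (hsub : Set.Icc c d ⊆ Metric.ball s₀ (ρ/2)) :
    AnalyticAt ℝ (fun x => ∫ s in c..d, F (x, s)) x₀ ∧
      ∀ᶠ x in 𝓝 x₀, IntervalIntegrable (fun s => F (x, s)) MeasureTheory.volume c d := by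
  have hpoly : ∀ (z : ℂ) (s : ℝ), dist z (x₀ : ℂ) < ρ → s ∈ Set.Icc c d →
      (z, (s : ℂ)) ∈ Metric.ball ((x₀ : ℂ), (s₀ : ℂ)) ρ := by
    intro z s hz hs
    rw [Metric.mem_ball, Prod.dist_eq]
    refine max_lt hz ?_
    show dist ((s:ℝ):ℂ) ((s₀:ℝ):ℂ) < ρ
    rw [Complex.isometry_ofReal.dist_eq]
    exact lt_trans (hsub hs) (by linarith)
  have hreal' : ∀ (x s : ℝ), dist x x₀ < ρ/2 → s ∈ Set.Icc c d →
      Ψ ((x : ℂ), (s : ℂ)) = ((F (x, s) : ℝ) : ℂ) := by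
    intro x s hx hs
    refine hreal (x, s) ?_
    rw [Prod.dist_eq]
    refine max_lt (lt_trans hx (by linarith)) (lt_trans (hsub hs) (by linarith))
  -- continuity of Ψ and of the derivative on the polydisc
  have hΨc : ContinuousOn Ψ (Metric.ball ((x₀ : ℂ), (s₀ : ℂ)) ρ) :=
    fun z hz => ((hΨ z hz).continuousAt).continuousWithinAt
  set Fd : ℂ × ℂ → ℂ := fun w => (fderiv ℂ Ψ w) ((1 : ℂ), (0 : ℂ)) with hFdd
  have hFd_an : AnalyticOnNhd ℂ (fderiv ℂ Ψ) (Metric.ball ((x₀ : ℂ), (s₀ : ℂ)) ρ) := hΨ.fderiv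
  have hFd_cont : ContinuousOn Fd (Metric.ball ((x₀ : ℂ), (s₀ : ℂ)) ρ) := by
    have h1 : ContinuousOn (fderiv ℂ Ψ) (Metric.ball ((x₀ : ℂ), (s₀ : ℂ)) ρ) :=
      fun z hz => ((hFd_an z hz).continuousAt).continuousWithinAt
    have h2 : Continuous fun g : (ℂ × ℂ) →L[ℂ] ℂ => g ((1 : ℂ), (0 : ℂ)) :=
      (ContinuousLinearMap.apply ℂ ℂ ((1 : ℂ), (0 : ℂ))).continuous
    exact h2.comp_continuousOn h1
  -- the compact set and the bound
  set K : Set (ℂ × ℂ) :=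
    Metric.closedBall ((x₀ : ℂ)) (ρ/2) ×ˢ ((fun s : ℝ => (s : ℂ)) '' Set.Icc c d) with hKdef
  have hKsub : K ⊆ Metric.ball ((x₀ : ℂ), (s₀ : ℂ)) ρ := by
    rintro ⟨z, w⟩ ⟨hz, ⟨s, hs, rfl⟩⟩
    rw [Metric.mem_ball, Prod.dist_eq]
    refine max_lt (lt_of_le_of_lt (Metric.mem_closedBall.1 hz) (by linarith)) ?_
    show dist ((s:ℝ):ℂ) ((s₀:ℝ):ℂ) < ρ
    rw [Complex.isometry_ofReal.dist_eq]
    exact lt_trans (hsub hs) (by linarith)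
  have hK : IsCompact K :=
    (isCompact_closedBall _ _).prod (isCompact_Icc.image (Complex.continuous_ofReal))
  obtain ⟨C, hC⟩ := hK.exists_bound_of_continuousOn (hFd_cont.mono hKsub)
  -- continuity in s for fixed z
  have hcont_s : ∀ z : ℂ, dist z (x₀ : ℂ) < ρ →
      ContinuousOn (fun s : ℝ => Ψ (z, (s : ℂ))) (Set.Icc c d) := by
    intro z hz
    refine hΨc.comp (Continuous.continuousOn (by continuity)) ?_
    intro s hs; exact hpoly z s hz hs
  have hcont_s' : ∀ z : ℂ, dist z (x₀ : ℂ) < ρ →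
      ContinuousOn (fun s : ℝ => Fd (z, (s : ℂ))) (Set.Icc c d) := by
    intro z hz
    refine hFd_cont.comp (Continuous.continuousOn (by continuity)) ?_
    intro s hs; exact hpoly z s hz hs
  -- the holomorphic parametric integral
  set Gc : ℂ → ℂ := fun z => ∫ s in c..d, Ψ (z, (s : ℂ)) with hGcdef
  have hG : ∀ z₀ ∈ Metric.ball ((x₀ : ℂ)) (ρ/2), DifferentiableAt ℂ Gc z₀ := by
    intro z₀ hz₀
    rw [Metric.mem_ball] at hz₀
    set ε : ℝ := (ρ/2 - dist z₀ (x₀ : ℂ))/2 with hεdef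
    have hε : 0 < ε := by simp only [hεdef]; linarith
    have hball_sub : ∀ z ∈ Metric.ball z₀ ε, dist z (x₀ : ℂ) ≤ ρ/2 := by
      intro z hz
      rw [Metric.mem_ball] at hz
      calc dist z (x₀ : ℂ) ≤ dist z z₀ + dist z₀ (x₀ : ℂ) := dist_triangle _ _ _
        _ ≤ ρ/2 := by simp only [hεdef] at hz ⊢; linarith
    have hmem : ∀ z ∈ Metric.ball z₀ ε, ∀ s ∈ Set.Icc c d,
        (z, (s : ℂ)) ∈ Metric.ball ((x₀ : ℂ), (s₀ : ℂ)) ρ := by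
      intro z hz s hs
      exact hpoly z s (lt_of_le_of_lt (hball_sub z hz) (by linarith)) hs
    have hIsub : Set.uIoc c d ⊆ Set.Icc c d := by
      rw [Set.uIoc_of_le hcd]; exact Set.Ioc_subset_Icc_self
    have key := intervalIntegral.hasDerivAt_integral_of_dominated_loc_of_deriv_le
      (F := fun z s => Ψ (z, (s : ℂ))) (F' := fun z s => Fd (z, (s : ℂ)))
      (x₀ := z₀) (a := c) (b := d) (μ := MeasureTheory.volume)
      (bound := fun _ => C) (Metric.ball_mem_nhds z₀ hε) ?_ ?_ ?_ ?_ ?_ ?_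
    · exact key.2.differentiableAt
    · refine Filter.eventually_of_mem (Metric.ball_mem_nhds z₀ hε) (fun z hz => ?_)
      exact (((hcont_s z (lt_of_le_of_lt (hball_sub z hz) (by linarith))).mono hIsub)).aestronglyMeasurable
        measurableSet_uIoc
    · exact ((hcont_s z₀ (by linarith)).mono (by rw [Set.uIcc_of_le hcd])).intervalIntegrable
    · exact (((hcont_s' z₀ (by linarith)).mono hIsub)).aestronglyMeasurable measurableSet_uIoc
    · refine Filter.Eventually.of_forall (fun s hs z hz => ?_)
      refine hC _ ?_
      refine Set.mk_mem_prod (Metric.mem_closedBall.2 (hball_sub z hz)) ?_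
      exact ⟨s, hIsub hs, rfl⟩
    · exact intervalIntegrable_const
    · refine Filter.Eventually.of_forall (fun s hs z hz => ?_)
      have hd : DifferentiableAt ℂ Ψ (z, (s : ℂ)) :=
        (hΨ _ (hmem z hz s (hIsub hs))).differentiableAt
      have h1 : HasDerivAt (fun z : ℂ => (z, (s : ℂ))) ((1 : ℂ), (0 : ℂ)) z :=
        (hasDerivAt_id z).prodMk (hasDerivAt_const z _)
      exact (hd.hasFDerivAt.comp_hasDerivAt z h1)
  have hGan : AnalyticOnNhd ℂ Gc (Metric.ball ((x₀ : ℂ)) (ρ/2)) :=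
    DifferentiableOn.analyticOnNhd (fun z hz => (hG z hz).differentiableWithinAt)
      Metric.isOpen_ball
  have hGat : AnalyticAt ℂ Gc ((x₀ : ℂ)) := hGan _ (Metric.mem_ball_self (by linarith))
  -- real restriction
  have hGreal : ∀ x : ℝ, dist x x₀ < ρ/2 →
      Gc ((x : ℂ)) = ((∫ s in c..d, F (x, s) : ℝ) : ℂ) := by
    intro x hx
    have : ∀ s ∈ Set.uIcc c d, Ψ ((x : ℂ), (s : ℂ)) = ((F (x, s) : ℝ) : ℂ) := by
      intro s hs
      exact hreal' x s hx (by rwa [Set.uIcc_of_le hcd] at hs)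
    rw [hGcdef]
    simp only
    rw [intervalIntegral.integral_congr this, intervalIntegral.integral_ofReal]
  constructor
  · have h1 : AnalyticAt ℝ Gc ((x₀ : ℂ)) := hGat.restrictScalars
    have h2 : AnalyticAt ℝ (fun x : ℝ => (x : ℂ)) x₀ := Complex.ofRealCLM.analyticAt x₀
    have h3 : AnalyticAt ℝ (fun x : ℝ => Gc ((x : ℂ))) x₀ := h1.comp h2
    have h4 : AnalyticAt ℝ (fun x : ℝ => (Gc ((x : ℂ))).re) x₀ :=
      (Complex.reCLM.analyticAt _).comp h3
    refine h4.congr ?_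
    refine Filter.eventually_of_mem (Metric.ball_mem_nhds x₀ (by linarith : (0:ℝ) < ρ/2))
      (fun x hx => ?_)
    rw [Metric.mem_ball] at hx
    show (Gc ((x : ℂ))).re = _
    rw [hGreal x hx]
    simp
  · refine Filter.eventually_of_mem (Metric.ball_mem_nhds x₀ (by linarith : (0:ℝ) < ρ/2))
      (fun x hx => ?_)
    rw [Metric.mem_ball] at hx
    have hcnt : ContinuousOn (fun s : ℝ => F (x, s)) (Set.Icc c d) := by
      have h1 : ContinuousOn (fun s : ℝ => (Ψ ((x : ℂ), (s : ℂ))).re) (Set.Icc c d) :=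
        Complex.continuous_re.comp_continuousOn
          (hcont_s (x : ℂ) (by rw [Complex.isometry_ofReal.dist_eq]; linarith))
      refine h1.congr (fun s hs => ?_)
      show _ = (Ψ _).re
      rw [hreal' x s hx hs]
      simp
    exact (hcnt.mono (by rw [Set.uIcc_of_le hcd])).intervalIntegrable


set_option maxHeartbeats 1000000 in
theorem analyticAt_param {F : ℝ × ℝ → ℝ} {x₀ : ℝ}
    (hF : ∀ s ∈ Set.Icc (0:ℝ) 1, AnalyticAt ℝ F (x₀, s)) :
    AnalyticAt ℝ (fun x => ∫ s in (0:ℝ)..1, F (x, s)) x₀ := by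
  have hext : ∀ s : Set.Icc (0:ℝ) 1, ∃ ρ > (0:ℝ), ∃ Ψ : ℂ × ℂ → ℂ,
      AnalyticOnNhd ℂ Ψ (Metric.ball ((x₀ : ℂ), ((s : ℝ) : ℂ)) ρ) ∧
      ∀ q : ℝ × ℝ, dist q (x₀, (s:ℝ)) < ρ → Ψ ((q.1 : ℂ), (q.2 : ℂ)) = ((F q : ℝ) : ℂ) :=
    fun s => exists_complex_extension (hF s s.2)
  choose ρ hρ Ψ hΨan hΨre using hext
  obtain ⟨δ, hδ, hcov⟩ := lebesgue_number_lemma_of_metric (isCompact_Icc (a := (0:ℝ)) (b := 1))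
    (fun s : Set.Icc (0:ℝ) 1 => Metric.isOpen_ball (x := (s:ℝ)) (ε := ρ s / 2))
    (fun x hx => Set.mem_iUnion.2 ⟨⟨x, hx⟩, Metric.mem_ball_self (half_pos (hρ ⟨x, hx⟩))⟩)
  obtain ⟨m0, hm0⟩ := exists_nat_one_div_lt hδ
  set m : ℕ := m0 + 1 with hmdef
  have hmpos : 0 < m := Nat.succ_pos _
  have hm : (1:ℝ)/m < δ := by exact_mod_cast hm0
  have hmR : (0:ℝ) < m := by exact_mod_cast hmpos
  set t : ℕ → ℝ := fun j => j / m with htdef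
  have htmono : ∀ j : ℕ, t j ≤ t (j+1) := by
    intro j
    simp only [htdef]
    gcongr
    exact_mod_cast Nat.le_succ j
  have hgap : ∀ j : ℕ, t (j+1) - t j = 1/m := by
    intro j
    simp only [htdef]
    push_cast
    field_simp
    ring
  have hmem_t : ∀ j : ℕ, j ≤ m → t j ∈ Set.Icc (0:ℝ) 1 := by
    intro j hj
    constructor
    · positivity
    · rw [div_le_one hmR]
      exact_mod_cast hj
  have hchoice : ∀ j : ℕ, j < m → ∃ i : Set.Icc (0:ℝ) 1,
      Metric.ball (t j) δ ⊆ Metric.ball ((i:ℝ)) (ρ i / 2) :=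
    fun j hj => hcov (t j) (hmem_t j hj.le)
  choose σ hσ using hchoice
  have hIccsub : ∀ (j : ℕ) (hj : j < m),
      Set.Icc (t j) (t (j+1)) ⊆ Metric.ball ((σ j hj : ℝ)) (ρ (σ j hj) / 2) := by
    intro j hj s hs
    refine hσ j hj ?_
    rw [Metric.mem_ball, Real.dist_eq, abs_sub_lt_iff]
    obtain ⟨h1, h2⟩ := hs
    have := hgap j
    constructor <;> [linarith [hm]; linarith [hm, hδ]]
  have hpieces : ∀ (j : ℕ) (hj : j < m),
      AnalyticAt ℝ (fun x => ∫ s in (t j)..(t (j+1)), F (x, s)) x₀ ∧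
      ∀ᶠ x in 𝓝 x₀, IntervalIntegrable (fun s => F (x, s)) MeasureTheory.volume (t j) (t (j+1)) :=
    fun j hj => analyticAt_piece (hρ (σ j hj)) (hΨan (σ j hj)) (hΨre (σ j hj))
      (htmono j) (hIccsub j hj)
  have hsum_an : AnalyticAt ℝ
      (fun x => ∑ j ∈ Finset.range m, ∫ s in (t j)..(t (j+1)), F (x, s)) x₀ :=
    Finset.analyticAt_fun_sum _ (fun j hj => (hpieces j (Finset.mem_range.1 hj)).1)
  have hint_all : ∀ᶠ x in 𝓝 x₀, ∀ j ∈ Finset.range m,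
      IntervalIntegrable (fun s => F (x, s)) MeasureTheory.volume (t j) (t (j+1)) :=
    (eventually_all_finite (Finset.range m).finite_toSet).2
      (fun j hj => (hpieces j (Finset.mem_range.1 hj)).2)
  refine hsum_an.congr ?_
  refine hint_all.mono (fun x hx => ?_)
  have heq := intervalIntegral.sum_integral_adjacent_intervals
    (f := fun s => F (x, s)) (μ := MeasureTheory.volume) (a := t)
    (fun k hk => hx k (Finset.mem_range.2 hk))
  have ht0 : t 0 = 0 := by simp [htdef]
  have htm : t m = 1 := by
    simp only [htdef]
    field_simp
  rw [ht0, htm] at heq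
  exact heq

end IntStrip
/-- Auxiliary integral lemma: if `a < b` are real-analytic near `0`, `n > 0`, and `f`
is real-analytic on a neighborhood of the relevant compact region, then there are
`h₀ > 0` and a real-analytic function `G` on a neighborhood of `[0, h₀^{1/n}]` such
that for all `h ∈ (0, h₀)`,
`∫∫_{0 < x < h^{1/n}, a(x) < y < b(x)} f = G (h^{1/n}) - G 0`. -/
theorem integral_over_analytic_strip (f : ℝ × ℝ → ℝ) (a b : ℝ → ℝ) (n : ℕ) (hn : 0 < n)
    (ε : ℝ) (hε : 0 < ε)
    (ha : AnalyticOnNhd ℝ a (Set.Icc (-ε) ε))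
    (hb : AnalyticOnNhd ℝ b (Set.Icc (-ε) ε))
    (hab : ∀ x ∈ Set.Icc (-ε) ε, a x < b x)
    (hf : AnalyticOnNhd ℝ f
      {p : ℝ × ℝ | p.1 ∈ Set.Icc 0 ε ∧ p.2 ∈ Set.Icc (a p.1) (b p.1)}) :
    ∃ h₀ > (0 : ℝ), ∃ G : ℝ → ℝ,
      AnalyticOnNhd ℝ G (Set.Icc 0 (h₀ ^ (1 / (n : ℝ)))) ∧
      ∀ h ∈ Set.Ioo (0 : ℝ) h₀,
        (∫ p in {p : ℝ × ℝ | 0 < p.1 ∧ p.1 < h ^ (1 / (n : ℝ)) ∧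
            a p.1 < p.2 ∧ p.2 < b p.1}, f p) = G (h ^ (1 / (n : ℝ))) - G 0 := by
  classical
  have h0ε : (0:ℝ) ∈ Set.Icc (-ε) ε := ⟨by linarith, by linarith⟩
  have hab0 : a 0 < b 0 := hab 0 h0ε
  set K : Set (ℝ × ℝ) := {p : ℝ × ℝ | p.1 ∈ Set.Icc 0 ε ∧ p.2 ∈ Set.Icc (a p.1) (b p.1)}
    with hKdef
  -- continuity of a, b on Icc (-ε) ε
  have haC : ∀ x ∈ Set.Icc (-ε) ε, ContinuousAt a x := fun x hx => (ha x hx).continuousAt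
  have hbC : ∀ x ∈ Set.Icc (-ε) ε, ContinuousAt b x := fun x hx => (hb x hx).continuousAt
  -- the inner 1-dimensional integral, rescaled to [0,1]
  set F₁ : ℝ × ℝ → ℝ :=
    fun p => (b p.1 - a p.1) * f (p.1, a p.1 + p.2 * (b p.1 - a p.1)) with hF₁def
  set g : ℝ → ℝ := fun x => ∫ s in (0:ℝ)..1, F₁ (x, s) with hgdef
  have hg_an : AnalyticAt ℝ g 0 := by
    apply IntStrip.analyticAt_param
    intro s hs
    have haa : AnalyticAt ℝ (fun p : ℝ × ℝ => a p.1) (0, s) :=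
      AnalyticAt.comp (f := fun p : ℝ × ℝ => p.1) (ha 0 h0ε) analyticAt_fst
    have hbb : AnalyticAt ℝ (fun p : ℝ × ℝ => b p.1) (0, s) :=
      AnalyticAt.comp (f := fun p : ℝ × ℝ => p.1) (hb 0 h0ε) analyticAt_fst
    have hinner : AnalyticAt ℝ
        (fun p : ℝ × ℝ => (p.1, a p.1 + p.2 * (b p.1 - a p.1))) (0, s) :=
      analyticAt_fst.prod (haa.add (analyticAt_snd.mul (hbb.sub haa)))
    have hfval : AnalyticAt ℝ f (0, a 0 + s * (b 0 - a 0)) := by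
      apply hf
      refine ⟨⟨le_refl 0, hε.le⟩, ?_, ?_⟩
      · show a 0 ≤ a 0 + s * (b 0 - a 0)
        nlinarith [hs.1, hs.2]
      · show a 0 + s * (b 0 - a 0) ≤ b 0
        nlinarith [hs.1, hs.2]
    exact (hbb.sub haa).mul (AnalyticAt.comp (f := fun p : ℝ × ℝ => (p.1, a p.1 + p.2 * (b p.1 - a p.1))) hfval hinner)
  -- the outer integral, rescaled to [0,1]
  set F₂ : ℝ × ℝ → ℝ := fun p => p.1 * g (p.2 * p.1) with hF₂def
  set G : ℝ → ℝ := fun t => ∫ s in (0:ℝ)..1, F₂ (t, s) with hGdef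
  have hG_an : AnalyticAt ℝ G 0 := by
    apply IntStrip.analyticAt_param
    intro s _
    refine analyticAt_fst.mul ?_
    have : AnalyticAt ℝ g (s * 0) := by rw [mul_zero]; exact hg_an
    exact AnalyticAt.comp (f := fun p : ℝ × ℝ => p.2 * p.1) (x := ((0:ℝ), s)) this (analyticAt_snd.mul analyticAt_fst)
  -- a ball on which G is analytic
  obtain ⟨pser, rG, hrG⟩ := hG_an
  obtain ⟨ρG, hρG0, hρGlt⟩ := ENNReal.lt_iff_exists_nnreal_btwn.1 hrG.r_pos
  rw [ENNReal.coe_pos] at hρG0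
  have hGball : ∀ x : ℝ, |x| < (ρG : ℝ) → AnalyticAt ℝ G x := by
    intro x hx
    refine hrG.analyticAt_of_mem ?_
    rw [EMetric.mem_ball, edist_zero_right]
    refine lt_trans ?_ hρGlt
    exact_mod_cast (by exact_mod_cast hx : ‖x‖₊ < ρG)
  -- choice of t₀ and h₀
  set t₀ : ℝ := min ((ρG : ℝ)/2) (ε/2) with ht₀def
  have ht₀pos : 0 < t₀ := lt_min (by positivity) (by linarith)
  have ht₀ρ : t₀ < (ρG : ℝ) := lt_of_le_of_lt (min_le_left _ _) (by
    have : (0:ℝ) < (ρG : ℝ) := by exact_mod_cast hρG0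
    linarith)
  have ht₀ε : t₀ ≤ ε/2 := min_le_right _ _
  refine ⟨t₀ ^ n, by positivity, G, ?_, ?_⟩
  · -- analyticity of G on the relevant interval
    have hroot : (t₀ ^ n) ^ (1 / (n : ℝ)) = t₀ := by
      rw [one_div]
      exact Real.pow_rpow_inv_natCast ht₀pos.le hn.ne'
    rw [hroot]
    intro x hx
    refine hGball x ?_
    rw [abs_of_nonneg hx.1]
    exact lt_of_le_of_lt hx.2 ht₀ρ
  · -- the main identity
    intro h hh
    set u : ℝ := h ^ (1 / (n : ℝ)) with hudef
    have hu0 : 0 < u := Real.rpow_pos_of_pos hh.1 _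
    have hut₀ : u < t₀ := by
      have h1 : u < (t₀ ^ n) ^ (1 / (n : ℝ)) := by
        apply Real.rpow_lt_rpow hh.1.le hh.2
        positivity
      rwa [one_div, Real.pow_rpow_inv_natCast ht₀pos.le hn.ne'] at h1
    have huε : u ≤ ε := by linarith
    -- `G 0 = 0`
    have hG0 : G 0 = 0 := by
      have : ∀ s : ℝ, F₂ (0, s) = 0 := by intro s; simp [hF₂def]
      simp [hGdef, this]
    -- `G u = ∫ x in 0..u, g x`
    have hGu : G u = ∫ x in (0:ℝ)..u, g x := by
      have h1 : (∫ s in (0:ℝ)..1, g (s * u)) = u⁻¹ • ∫ x in (0*u:ℝ)..(1*u:ℝ), g x :=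
        intervalIntegral.integral_comp_mul_right g hu0.ne'
      calc G u = ∫ s in (0:ℝ)..1, u * g (s * u) := rfl
        _ = u * ∫ s in (0:ℝ)..1, g (s * u) := intervalIntegral.integral_const_mul u _
        _ = u * (u⁻¹ • ∫ x in (0*u:ℝ)..(1*u:ℝ), g x) := by rw [h1]
        _ = ∫ x in (0:ℝ)..u, g x := by
            rw [smul_eq_mul, zero_mul, one_mul]
            field_simp
    -- inner integral: change of variables
    have hgx : ∀ x ∈ Set.uIcc (0:ℝ) u, g x = ∫ y in (a x)..(b x), f (x, y) := by
      intro x hx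
      rw [Set.uIcc_of_le hu0.le] at hx
      have hxε : x ∈ Set.Icc (-ε) ε := ⟨by linarith [hx.1], by linarith [hx.2]⟩
      have hcne : b x - a x ≠ 0 := sub_ne_zero.2 (hab x hxε).ne'
      calc g x = ∫ s in (0:ℝ)..1, (b x - a x) * f (x, a x + s * (b x - a x)) := rfl
        _ = (b x - a x) * ∫ s in (0:ℝ)..1, f (x, a x + s * (b x - a x)) :=
            intervalIntegral.integral_const_mul _ _
        _ = (b x - a x) * ∫ s in (0:ℝ)..1, (fun y => f (x, y)) ((b x - a x) * s + a x) := by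
            congr 1
            refine intervalIntegral.integral_congr (fun s _ => ?_)
            rw [show a x + s * (b x - a x) = (b x - a x) * s + a x from by ring]
        _ = (b x - a x) * ((b x - a x)⁻¹ •
              ∫ y in ((b x - a x) * 0 + a x)..((b x - a x) * 1 + a x), f (x, y)) := by
            rw [intervalIntegral.integral_comp_mul_add (fun y => f (x, y)) hcne (a x)]
        _ = ∫ y in (a x)..(b x), f (x, y) := by
            rw [smul_eq_mul,
              show (b x - a x) * 0 + a x = a x from by ring,
              show (b x - a x) * 1 + a x = b x from by ring]
            field_simp
    -- Fubini
    have hfub : (∫ p in {p : ℝ × ℝ | 0 < p.1 ∧ p.1 < u ∧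
          a p.1 < p.2 ∧ p.2 < b p.1}, f p)
        = ∫ x in (0:ℝ)..u, (∫ y in (a x)..(b x), f (x, y)) := by
      set S : Set (ℝ × ℝ) := {p : ℝ × ℝ | 0 < p.1 ∧ p.1 < u ∧ a p.1 < p.2 ∧ p.2 < b p.1}
        with hSdef
      have hSopen : IsOpen S := by
        rw [isOpen_iff_mem_nhds]
        rintro ⟨x, y⟩ ⟨h1, h2, h3, h4⟩
        have hxε : x ∈ Set.Icc (-ε) ε := ⟨by linarith, by linarith⟩
        have hca : ContinuousAt (fun p : ℝ × ℝ => a p.1) (x, y) :=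
          (haC x hxε).comp continuousAt_fst
        have hcb : ContinuousAt (fun p : ℝ × ℝ => b p.1) (x, y) :=
          (hbC x hxε).comp continuousAt_fst
        have e1 : ∀ᶠ p : ℝ × ℝ in 𝓝 (x, y), 0 < p.1 :=
          ContinuousAt.eventually_lt continuousAt_const continuousAt_fst h1
        have e2 : ∀ᶠ p : ℝ × ℝ in 𝓝 (x, y), p.1 < u :=
          ContinuousAt.eventually_lt continuousAt_fst continuousAt_const h2
        have e3 : ∀ᶠ p : ℝ × ℝ in 𝓝 (x, y), a p.1 < p.2 :=
          ContinuousAt.eventually_lt hca continuousAt_snd h3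
        have e4 : ∀ᶠ p : ℝ × ℝ in 𝓝 (x, y), p.2 < b p.1 :=
          ContinuousAt.eventually_lt continuousAt_snd hcb h4
        exact e1.and (e2.and (e3.and e4))
      have hSmeas : MeasurableSet S := hSopen.measurableSet
      -- K is compact
      have hψ : ContinuousOn (fun q : ℝ × ℝ => (q.1, a q.1 + q.2 * (b q.1 - a q.1)))
          (Set.Icc 0 ε ×ˢ Set.Icc (0:ℝ) 1) := by
        intro q hq
        have hq1 : q.1 ∈ Set.Icc (-ε) ε := ⟨by linarith [hq.1.1], hq.1.2⟩
        have ha' : ContinuousAt a q.1 := haC _ hq1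
        have hb' : ContinuousAt b q.1 := hbC _ hq1
        apply ContinuousAt.continuousWithinAt
        exact continuousAt_fst.prodMk ((ha'.comp continuousAt_fst).add
          (continuousAt_snd.mul ((hb'.comp continuousAt_fst).sub (ha'.comp continuousAt_fst))))
      have hKeq : K = (fun q : ℝ × ℝ => (q.1, a q.1 + q.2 * (b q.1 - a q.1))) ''
          (Set.Icc 0 ε ×ˢ Set.Icc (0:ℝ) 1) := by
        apply Set.Subset.antisymm
        · rintro ⟨x, y⟩ ⟨hx, hy⟩
          have hxε : x ∈ Set.Icc (-ε) ε := ⟨by linarith [hx.1], hx.2⟩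
          have hd : 0 < b x - a x := sub_pos.2 (hab x hxε)
          refine ⟨(x, (y - a x)/(b x - a x)), ⟨hx, ?_, ?_⟩, ?_⟩
          · exact div_nonneg (by linarith [hy.1]) hd.le
          · rw [div_le_one hd]; linarith [hy.2]
          · show (x, a x + (y - a x)/(b x - a x) * (b x - a x)) = (x, y)
            rw [Prod.ext_iff]
            refine ⟨rfl, ?_⟩
            show a x + (y - a x)/(b x - a x) * (b x - a x) = y
            rw [div_mul_cancel₀ _ hd.ne']; ring
        · rintro p ⟨q, hq, rfl⟩
          obtain ⟨hq1, hq2⟩ := hq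
          have hq1ε : q.1 ∈ Set.Icc (-ε) ε := ⟨by linarith [hq1.1], hq1.2⟩
          have hd : 0 < b q.1 - a q.1 := sub_pos.2 (hab _ hq1ε)
          refine ⟨hq1, ?_, ?_⟩
          · show a q.1 ≤ a q.1 + q.2 * (b q.1 - a q.1)
            nlinarith [hq2.1, hq2.2]
          · show a q.1 + q.2 * (b q.1 - a q.1) ≤ b q.1
            nlinarith [hq2.1, hq2.2]
      have hKcomp : IsCompact K := by
        rw [hKeq]
        exact (isCompact_Icc.prod isCompact_Icc).image_of_continuousOn hψ
      have hfK : ContinuousOn f K := fun p hp => (hf p hp).continuousAt.continuousWithinAt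
      obtain ⟨M, hM⟩ := hKcomp.exists_bound_of_continuousOn hfK
      have hSsubK : S ⊆ K := by
        rintro ⟨x, y⟩ ⟨h1, h2, h3, h4⟩
        exact ⟨⟨h1.le, by linarith⟩, h3.le, h4.le⟩
      have hSfin : MeasureTheory.volume S ≠ ⊤ :=
        (lt_of_le_of_lt (MeasureTheory.measure_mono hSsubK) hKcomp.measure_lt_top).ne
      have hIntS : MeasureTheory.IntegrableOn f S MeasureTheory.volume := by
        refine ⟨((hfK.mono hSsubK)).aestronglyMeasurable hSmeas, ?_⟩
        refine MeasureTheory.HasFiniteIntegral.restrict_of_bounded (C := M) hSfin.lt_top ?_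
        exact MeasureTheory.ae_restrict_of_forall_mem hSmeas (fun x hx => hM x (hSsubK hx))
      have hind : MeasureTheory.Integrable (Set.indicator S f)
          (MeasureTheory.volume.prod MeasureTheory.volume) :=
        (MeasureTheory.integrable_indicator_iff hSmeas).2 hIntS
      have hinner : ∀ x : ℝ, (∫ y, Set.indicator S f (x, y)) =
          Set.indicator (Set.Ioo (0:ℝ) u)
            (fun x' => ∫ y in Set.Ioo (a x') (b x'), f (x', y)) x := by
        intro x
        by_cases hx : x ∈ Set.Ioo (0:ℝ) u
        · have hy_eq : ∀ y : ℝ, Set.indicator S f (x, y)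
              = Set.indicator (Set.Ioo (a x) (b x)) (fun y => f (x, y)) y := by
            intro y
            by_cases hy : y ∈ Set.Ioo (a x) (b x)
            · rw [Set.indicator_of_mem hy,
                Set.indicator_of_mem (show (x, y) ∈ S from ⟨hx.1, hx.2, hy.1, hy.2⟩)]
            · rw [Set.indicator_of_notMem hy, Set.indicator_of_notMem
                (show (x, y) ∉ S from fun hmem => hy ⟨hmem.2.2.1, hmem.2.2.2⟩)]
          rw [MeasureTheory.integral_congr_ae (Filter.EventuallyEq.of_eq (funext hy_eq)),
            MeasureTheory.integral_indicator measurableSet_Ioo,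
            Set.indicator_of_mem hx]
        · rw [Set.indicator_of_notMem hx]
          have hy0 : ∀ y : ℝ, Set.indicator S f (x, y) = 0 := fun y =>
            Set.indicator_of_notMem (fun hmem => hx ⟨hmem.1, hmem.2.1⟩) _
          simp [funext hy0]
      calc (∫ p in S, f p)
          = ∫ p, Set.indicator S f p := (MeasureTheory.integral_indicator hSmeas).symm
        _ = ∫ p, Set.indicator S f p ∂(MeasureTheory.volume.prod MeasureTheory.volume) := rfl
        _ = ∫ x, (∫ y, Set.indicator S f (x, y)) := MeasureTheory.integral_prod _ hind
        _ = ∫ x, Set.indicator (Set.Ioo (0:ℝ) u)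
              (fun x' => ∫ y in Set.Ioo (a x') (b x'), f (x', y)) x :=
            MeasureTheory.integral_congr_ae (Filter.EventuallyEq.of_eq (funext hinner))
        _ = ∫ x in Set.Ioo (0:ℝ) u, (∫ y in Set.Ioo (a x) (b x), f (x, y)) :=
            MeasureTheory.integral_indicator measurableSet_Ioo
        _ = ∫ x in (0:ℝ)..u, (∫ y in (a x)..(b x), f (x, y)) := by
            rw [intervalIntegral.integral_of_le hu0.le,
              MeasureTheory.integral_Ioc_eq_integral_Ioo]
            refine MeasureTheory.setIntegral_congr_fun measurableSet_Ioo (fun x hx => ?_)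
            have hxε : x ∈ Set.Icc (-ε) ε := ⟨by linarith [hx.1], by linarith [hx.2]⟩
            rw [intervalIntegral.integral_of_le (hab x hxε).le,
              MeasureTheory.integral_Ioc_eq_integral_Ioo]
    rw [hfub, hG0, sub_zero, hGu]
    exact (intervalIntegral.integral_congr hgx).symm
end
end

section
/- Let n, m be positive integers and k, l nonnegative integers with (k+1)/n ≠ (l+1)/m. Then for every h ∈ (0,1): ∫∫_{{(x,y) : 0 < x < 1, 0 < y < 1, x^n y^m < h}} x^k y^l dx dy = h^{(l+1)/m} / ((k+1)(l+1)) + (h^{(k+1)/n} − h^{(l+1)/m}) / ((k+1)(l + 1 − m(k+1)/n)). -/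
open MeasureTheory Real Set

set_option maxHeartbeats 1000000 in
/-- Non-resonant monomial computation: for positive integers `n, m`, nonnegative
integers `k, l` with `(k+1)/n ≠ (l+1)/m`, and `h ∈ (0,1)`,
`∫∫_{0<x<1, 0<y<1, xⁿyᵐ<h} x^k y^l dx dy
  = h^{(l+1)/m}/((k+1)(l+1)) + (h^{(k+1)/n} - h^{(l+1)/m})/((k+1)(l+1-m(k+1)/n))`. -/
theorem monomial_sublevel_integral_nonresonant (n m : ℕ) (hn : 0 < n) (hm : 0 < m)
    (k l : ℕ) (hres : ((k : ℝ) + 1) / n ≠ ((l : ℝ) + 1) / m)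
    (h : ℝ) (hh : h ∈ Set.Ioo (0 : ℝ) 1) :
    (∫ p in {p : ℝ × ℝ | 0 < p.1 ∧ p.1 < 1 ∧ 0 < p.2 ∧ p.2 < 1 ∧
        p.1 ^ n * p.2 ^ m < h}, p.1 ^ k * p.2 ^ l) =
      h ^ (((l : ℝ) + 1) / m) / (((k : ℝ) + 1) * ((l : ℝ) + 1)) +
        (h ^ (((k : ℝ) + 1) / n) - h ^ (((l : ℝ) + 1) / m)) /
          (((k : ℝ) + 1) * ((l : ℝ) + 1 - m * ((k : ℝ) + 1) / n)) := by
  obtain ⟨hh0, hh1⟩ := hh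
  have hn0 : (0:ℝ) < n := by exact_mod_cast hn
  have hm0 : (0:ℝ) < m := by exact_mod_cast hm
  set S : Set (ℝ × ℝ) := {p : ℝ × ℝ | 0 < p.1 ∧ p.1 < 1 ∧ 0 < p.2 ∧ p.2 < 1 ∧
      p.1 ^ n * p.2 ^ m < h} with hSdef
  set f : ℝ × ℝ → ℝ := fun p => p.1 ^ k * p.2 ^ l with hfdef
  -- S is open, hence measurable
  have hSopen : IsOpen S := by
    have : S = {p : ℝ × ℝ | 0 < p.1} ∩ ({p : ℝ × ℝ | p.1 < 1} ∩ ({p : ℝ × ℝ | 0 < p.2}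
        ∩ ({p : ℝ × ℝ | p.2 < 1} ∩ {p : ℝ × ℝ | p.1 ^ n * p.2 ^ m < h}))) := rfl
    rw [this]
    exact (isOpen_lt continuous_const continuous_fst).inter
      ((isOpen_lt continuous_fst continuous_const).inter
        ((isOpen_lt continuous_const continuous_snd).inter
          ((isOpen_lt continuous_snd continuous_const).inter
            (isOpen_lt (by fun_prop) continuous_const))))
  have hS : MeasurableSet S := hSopen.measurableSet
  -- integrability of the indicator
  have hfcont : Continuous f := by fun_prop
  have hSsub : S ⊆ Icc ((0:ℝ), (0:ℝ)) ((1:ℝ), (1:ℝ)) := by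
    rintro p ⟨h1, h2, h3, h4, -⟩
    exact ⟨⟨h1.le, h3.le⟩, ⟨h2.le, h4.le⟩⟩
  have hint : IntegrableOn f S :=
    ((hfcont.continuousOn.integrableOn_compact isCompact_Icc).mono_set hSsub)
  have hind : Integrable (S.indicator f) := (integrable_indicator_iff hS).mpr hint
  -- the inner integral
  set φ : ℝ → ℝ := fun x => x ^ k * (min 1 ((h / x ^ n) ^ ((m:ℝ)⁻¹))) ^ (l+1) / (l+1)
    with hφdef
  have inner : ∀ x : ℝ, (∫ y, S.indicator f (x, y)) = (Ioo (0:ℝ) 1).indicator φ x := by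
    intro x
    by_cases hx : x ∈ Ioo (0:ℝ) 1
    · obtain ⟨hx0, hx1⟩ := hx
      have hxn : (0:ℝ) < x ^ n := pow_pos hx0 n
      have hdiv : (0:ℝ) < h / x ^ n := div_pos hh0 hxn
      set c : ℝ := (h / x ^ n) ^ ((m:ℝ)⁻¹) with hc
      have hc0 : 0 < c := rpow_pos_of_pos hdiv _
      have hset : ∀ y : ℝ, (x, y) ∈ S ↔ y ∈ Ioo 0 (min 1 c) := by
        intro y
        simp only [hSdef, mem_setOf_eq, mem_Ioo, lt_min_iff]
        constructor
        · rintro ⟨-, -, hy0, hy1, hyh⟩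
          refine ⟨hy0, hy1, ?_⟩
          rw [hc, lt_rpow_inv_iff_of_pos hy0.le hdiv.le hm0, rpow_natCast]
          rw [lt_div_iff₀ hxn]
          linarith [hyh]
        · rintro ⟨hy0, hy1, hyc⟩
          refine ⟨hx0, hx1, hy0, hy1, ?_⟩
          have := (lt_rpow_inv_iff_of_pos hy0.le hdiv.le hm0).mp hyc
          rw [rpow_natCast, lt_div_iff₀ hxn] at this
          linarith [this]
      have heq : (fun y => S.indicator f (x, y))
          = (Ioo 0 (min 1 c)).indicator (fun y => x ^ k * y ^ l) := by
        funext y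
        by_cases hy : (x, y) ∈ S
        · rw [indicator_of_mem hy, indicator_of_mem ((hset y).mp hy)]
        · have hnot : y ∉ Ioo 0 (min 1 c) := fun hmem => hy ((hset y).mpr hmem)
          rw [indicator_of_notMem hy, indicator_of_notMem hnot]
      have hb0 : (0:ℝ) ≤ min 1 c := le_min zero_le_one hc0.le
      rw [heq, integral_indicator measurableSet_Ioo, ← integral_Ioc_eq_integral_Ioo,
        ← intervalIntegral.integral_of_le hb0, intervalIntegral.integral_const_mul,
        integral_pow, indicator_of_mem (show x ∈ Ioo (0:ℝ) 1 from ⟨hx0, hx1⟩), hφdef]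
      have : ((0:ℝ)) ^ (l+1) = 0 := zero_pow (Nat.succ_ne_zero l)
      rw [this]
      ring
    · have hz : ∀ y : ℝ, S.indicator f (x, y) = 0 := by
        intro y
        refine indicator_of_notMem (fun hmem => hx ⟨hmem.1, hmem.2.1⟩) _
      simp only [hz, integral_zero, indicator_of_notMem hx]
  -- Fubini
  rw [← integral_indicator hS, Measure.volume_eq_prod, integral_prod _ (by
    rwa [← Measure.volume_eq_prod])]
  simp only [← hfdef, inner]
  rw [integral_indicator measurableSet_Ioo]
  -- split the outer integral at t = h^(1/n)
  set t : ℝ := h ^ ((n:ℝ)⁻¹) with htdef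
  have ht0 : 0 < t := rpow_pos_of_pos hh0 _
  have ht1 : t < 1 := rpow_lt_one hh0.le hh1 (by positivity)
  have htn : t ^ n = h := rpow_inv_natCast_pow hh0.le hn.ne'
  have hK : (0:ℝ) < (k:ℝ) + 1 := by positivity
  have hL : (0:ℝ) < (l:ℝ) + 1 := by positivity
  set r : ℝ := (k:ℝ) - n * (((l:ℝ)+1)/m) with hrdef
  have hr1 : r + 1 = ((k:ℝ)+1) - n * (((l:ℝ)+1)/m) := by rw [hrdef]; ring
  have hαβ : ((k:ℝ)+1)/n - ((l:ℝ)+1)/m ≠ 0 := sub_ne_zero.mpr hres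
  have hr1ne : r + 1 ≠ 0 := by
    rw [hr1]
    intro h0
    apply hαβ
    field_simp at h0 ⊢
    linarith [h0]
  -- the two pieces
  have hEq1 : EqOn φ (fun x => x ^ k / ((l:ℝ)+1)) (Ioc 0 t) := by
    intro x hx
    have hx0 : 0 < x := hx.1
    have hxn : x ^ n ≤ h := by
      calc x ^ n ≤ t ^ n := pow_le_pow_left₀ hx0.le hx.2 n
      _ = h := htn
    have h1c : (1:ℝ) ≤ (h / x ^ n) ^ ((m:ℝ)⁻¹) :=
      Real.one_le_rpow ((one_le_div (pow_pos hx0 n)).mpr hxn) (by positivity)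
    simp only [hφdef, min_eq_left h1c, one_pow, mul_one]
  have hEq2 : EqOn φ (fun x => h ^ (((l:ℝ)+1)/m) / ((l:ℝ)+1) * x ^ r) (Ioc t 1) := by
    intro x hx
    have hx0 : 0 < x := ht0.trans hx.1
    have hxn : h < x ^ n := by
      calc h = t ^ n := htn.symm
      _ < x ^ n := pow_lt_pow_left₀ hx.1 ht0.le hn.ne'
    have hxnpos : (0:ℝ) < x ^ n := pow_pos hx0 n
    have hdiv1 : h / x ^ n < 1 := (div_lt_one hxnpos).mpr hxn
    have hdivpos : (0:ℝ) < h / x ^ n := div_pos hh0 hxnpos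
    have hclt : (h / x ^ n) ^ ((m:ℝ)⁻¹) < 1 := rpow_lt_one hdivpos.le hdiv1 (by positivity)
    simp only [hφdef, min_eq_right hclt.le]
    rw [← rpow_natCast ((h / x ^ n) ^ ((m:ℝ)⁻¹)) (l+1), ← rpow_mul hdivpos.le,
      div_rpow hh0.le hxnpos.le, ← rpow_natCast x n, ← rpow_mul hx0.le]
    have hexp : (m:ℝ)⁻¹ * ((l:ℕ)+1 : ℕ) = ((l:ℝ)+1)/m := by
      push_cast; ring
    rw [hexp]
    rw [show x ^ k = x ^ ((k:ℝ)) from (rpow_natCast x k).symm]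
    rw [hrdef, rpow_sub hx0]
    field_simp
  have hint1 : IntegrableOn φ (Ioc 0 t) := by
    refine IntegrableOn.congr_fun ?_ hEq1.symm measurableSet_Ioc
    exact ((by fun_prop : Continuous fun x : ℝ => x ^ k / ((l:ℝ)+1)).continuousOn.integrableOn_compact
      isCompact_Icc).mono_set Ioc_subset_Icc_self
  have hint2 : IntegrableOn φ (Ioc t 1) := by
    refine IntegrableOn.congr_fun ?_ hEq2.symm measurableSet_Ioc
    refine (ContinuousOn.integrableOn_compact (isCompact_Icc (a := t) (b := 1)) ?_).mono_set
      Ioc_subset_Icc_self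
    refine ContinuousOn.mul continuousOn_const ?_
    intro x hx
    exact (Real.continuousAt_rpow_const x r (Or.inl (ht0.trans_le hx.1).ne')).continuousWithinAt
  rw [← integral_Ioc_eq_integral_Ioo, ← Ioc_union_Ioc_eq_Ioc ht0.le ht1.le,
    setIntegral_union (Ioc_disjoint_Ioc_of_le le_rfl) measurableSet_Ioc hint1 hint2,
    setIntegral_congr_fun measurableSet_Ioc hEq1, setIntegral_congr_fun measurableSet_Ioc hEq2,
    ← intervalIntegral.integral_of_le ht0.le, ← intervalIntegral.integral_of_le ht1.le]
  rw [intervalIntegral.integral_div, integral_pow, intervalIntegral.integral_const_mul,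
    integral_rpow (Or.inr ⟨fun he => hr1ne (by rw [he]; ring), by
      simp only [uIcc_of_le ht1.le, mem_Icc, not_and]
      intro h0; linarith⟩)]
  have hzero : ((0:ℝ)) ^ (k+1) = 0 := zero_pow (Nat.succ_ne_zero k)
  have htk : t ^ (k+1) = h ^ (((k:ℝ)+1)/n) := by
    rw [← rpow_natCast t (k+1), htdef, ← rpow_mul hh0.le]
    congr 1
    push_cast
    field_simp
  have htr : t ^ (r+1) = h ^ (((k:ℝ)+1)/n) / h ^ (((l:ℝ)+1)/m) := by
    rw [htdef, ← rpow_mul hh0.le, ← rpow_sub hh0]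
    congr 1
    rw [hr1]
    field_simp
  have h3 : (k:ℝ) + 1 - n * (((l:ℝ)+1)/m) ≠ 0 := by rwa [hr1] at hr1ne
  have hne2 : (l:ℝ) + 1 - m * ((k:ℝ)+1) / n ≠ 0 := by
    have he : (l:ℝ) + 1 - m * ((k:ℝ)+1) / n = m * (((l:ℝ)+1)/m - ((k:ℝ)+1)/n) := by
      field_simp
    rw [he]
    exact mul_ne_zero hm0.ne' (sub_ne_zero.mpr (Ne.symm hres))
  rw [hzero, one_rpow, htk, htr, hr1]
  have hApos : (0:ℝ) < h ^ (((k:ℝ)+1)/n) := rpow_pos_of_pos hh0 _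
  have hBpos : (0:ℝ) < h ^ (((l:ℝ)+1)/m) := rpow_pos_of_pos hh0 _
  set A := h ^ (((k:ℝ)+1)/n) with hA
  set B := h ^ (((l:ℝ)+1)/m) with hB
  have hQ : (m:ℝ)*((k:ℝ)+1) - n*((l:ℝ)+1) ≠ 0 := by
    have he : (m:ℝ)*((k:ℝ)+1) - n*((l:ℝ)+1) = m * (((k:ℝ)+1) - n*(((l:ℝ)+1)/m)) := by
      field_simp
    rw [he]
    exact mul_ne_zero hm0.ne' h3
  have hP : (n:ℝ)*((l:ℝ)+1) - m*((k:ℝ)+1) ≠ 0 := fun q => hQ (by linarith)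
  have e1 : (k:ℝ) + 1 - n * (((l:ℝ)+1)/m) = ((m:ℝ)*((k:ℝ)+1) - n*((l:ℝ)+1))/m := by
    field_simp
  have e2 : (l:ℝ) + 1 - m*((k:ℝ)+1)/n = ((n:ℝ)*((l:ℝ)+1) - m*((k:ℝ)+1))/n := by
    field_simp
  rw [e1, e2]
  field_simp
  have hD : ((k:ℝ)+1)*m - ((l:ℝ)+1)*n ≠ 0 := fun q => hQ (by linarith)
  rw [show ((l:ℝ)+1)*n - ((k:ℝ)+1)*m = -(((k:ℝ)+1)*m - ((l:ℝ)+1)*n) by ring, div_neg]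
  linear_combination (B - A) * (mul_inv_cancel₀ hD)
end

section
/- Let n, m be positive integers and k, l nonnegative integers with (k+1)/n = (l+1)/m. Then for every h ∈ (0,1): ∫∫_{{(x,y) : 0 < x < 1, 0 < y < 1, x^n y^m < h}} x^k y^l dx dy = h^{(l+1)/m} / ((k+1)(l+1)) + (1/(m(k+1))) · h^{(k+1)/n} · ln(1/h). -/
open MeasureTheory Set

set_option maxHeartbeats 1000000

/-- Resonant monomial computation: for positive integers `n, m`, nonnegative
integers `k, l` with `(k+1)/n = (l+1)/m`, and `h ∈ (0,1)`,
`∫∫_{0<x<1, 0<y<1, xⁿyᵐ<h} x^k y^l dx dy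
  = h^{(l+1)/m}/((k+1)(l+1)) + (1/(m(k+1))) · h^{(k+1)/n} · ln(1/h)`. -/
theorem monomial_sublevel_integral_resonant (n m : ℕ) (hn : 0 < n) (hm : 0 < m)
    (k l : ℕ) (hres : ((k : ℝ) + 1) / n = ((l : ℝ) + 1) / m)
    (h : ℝ) (hh : h ∈ Set.Ioo (0 : ℝ) 1) :
    (∫ p in {p : ℝ × ℝ | 0 < p.1 ∧ p.1 < 1 ∧ 0 < p.2 ∧ p.2 < 1 ∧
        p.1 ^ n * p.2 ^ m < h}, p.1 ^ k * p.2 ^ l) =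
      h ^ (((l : ℝ) + 1) / m) / (((k : ℝ) + 1) * ((l : ℝ) + 1)) +
        (1 / (m * ((k : ℝ) + 1))) * h ^ (((k : ℝ) + 1) / n) * Real.log (1 / h) := by
  obtain ⟨hh0, hh1⟩ := hh
  have hn' : (0:ℝ) < n := by exact_mod_cast hn
  have hm' : (0:ℝ) < m := by exact_mod_cast hm
  have hk1 : (0:ℝ) < (k:ℝ) + 1 := by positivity
  have hl1 : (0:ℝ) < (l:ℝ) + 1 := by positivity
  have hcross : ((k:ℝ) + 1) * m = ((l:ℝ) + 1) * n := by
    field_simp at hres; linarith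
  set β : ℝ := ((l:ℝ) + 1) / m with hβ
  have hαβ : ((k:ℝ) + 1) / n = β := hres
  set t : ℝ := h ^ ((n:ℝ)⁻¹) with ht
  have ht0 : 0 < t := Real.rpow_pos_of_pos hh0 _
  have ht1 : t < 1 := Real.rpow_lt_one hh0.le hh1 (by positivity)
  have htn : t ^ n = h := Real.rpow_inv_natCast_pow hh0.le hn.ne'
  set c : ℝ → ℝ := fun x => min 1 ((h / x ^ n) ^ ((m:ℝ)⁻¹)) with hc
  set S : Set (ℝ × ℝ) := {p : ℝ × ℝ | 0 < p.1 ∧ p.1 < 1 ∧ 0 < p.2 ∧ p.2 < 1 ∧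
      p.1 ^ n * p.2 ^ m < h} with hS
  have hSm : MeasurableSet S := by
    apply MeasurableSet.inter (measurableSet_lt measurable_const measurable_fst)
    apply MeasurableSet.inter (measurableSet_lt measurable_fst measurable_const)
    apply MeasurableSet.inter (measurableSet_lt measurable_const measurable_snd)
    apply MeasurableSet.inter (measurableSet_lt measurable_snd measurable_const)
    exact measurableSet_lt ((measurable_fst.pow_const n).mul (measurable_snd.pow_const m)) measurable_const
  have hsq : S ⊆ Ioo (0:ℝ) 1 ×ˢ Ioo (0:ℝ) 1 :=
    fun p hp => ⟨⟨hp.1, hp.2.1⟩, hp.2.2.1, hp.2.2.2.1⟩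
  have hf_cont : Continuous fun p : ℝ × ℝ => p.1 ^ k * p.2 ^ l := by continuity
  have hf_int : IntegrableOn (fun p : ℝ × ℝ => p.1 ^ k * p.2 ^ l) S := by
    refine IntegrableOn.mono_set ?_
      (hsq.trans (prod_mono Ioo_subset_Icc_self Ioo_subset_Icc_self))
    exact hf_cont.continuousOn.integrableOn_compact (isCompact_Icc.prod isCompact_Icc)
  -- slices
  have slice : ∀ x ∈ Ioo (0:ℝ) 1, ∀ y : ℝ, ((x, y) ∈ S ↔ y ∈ Ioo 0 (c x)) := by
    rintro x ⟨hx0, hx1⟩ y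
    have hxn : (0:ℝ) < x ^ n := by positivity
    have hAn : (0:ℝ) < h / x ^ n := by positivity
    simp only [hS, mem_setOf_eq, mem_Ioo]
    constructor
    · rintro ⟨-, -, hy0, hy1, hlt⟩
      refine ⟨hy0, lt_min hy1 ?_⟩
      rw [Real.lt_rpow_inv_iff_of_pos hy0.le hAn.le hm', Real.rpow_natCast,
        lt_div_iff₀ hxn]
      linarith [hlt]
    · rintro ⟨hy0, hyc⟩
      have hy1 : y < 1 := lt_of_lt_of_le hyc (min_le_left _ _)
      have hy2 : y < (h / x ^ n) ^ ((m:ℝ)⁻¹) := lt_of_lt_of_le hyc (min_le_right _ _)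
      rw [Real.lt_rpow_inv_iff_of_pos hy0.le hAn.le hm', Real.rpow_natCast,
        lt_div_iff₀ hxn] at hy2
      exact ⟨hx0, hx1, hy0, hy1, by linarith⟩
  have hcpos : ∀ x ∈ Ioo (0:ℝ) 1, 0 < c x := by
    rintro x ⟨hx0, hx1⟩
    exact lt_min one_pos (Real.rpow_pos_of_pos (by positivity) _)
  set F : ℝ → ℝ := fun x => x ^ k * (c x ^ (l + 1) / ((l:ℝ) + 1)) with hF
  -- Fubini
  have fub : (∫ p in S, p.1 ^ k * p.2 ^ l) = ∫ x in Ioo (0:ℝ) 1, F x := by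
    rw [← integral_indicator hSm]
    rw [Measure.volume_eq_prod]
    rw [MeasureTheory.integral_prod]
    · rw [← integral_indicator measurableSet_Ioo]
      congr 1
      funext x
      by_cases hx : x ∈ Ioo (0:ℝ) 1
      · rw [indicator_of_mem hx]
        have : (fun y => S.indicator (fun p : ℝ × ℝ => p.1 ^ k * p.2 ^ l) (x, y))
            = (Ioo 0 (c x)).indicator (fun y => x ^ k * y ^ l) := by
          funext y
          by_cases hy : y ∈ Ioo 0 (c x)
          · rw [indicator_of_mem hy, indicator_of_mem ((slice x hx y).mpr hy)]
          · rw [indicator_of_notMem hy,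
              indicator_of_notMem (fun hmem => hy ((slice x hx y).mp hmem))]
        rw [this, integral_indicator measurableSet_Ioo, ← integral_Ioc_eq_integral_Ioo,
          ← intervalIntegral.integral_of_le (hcpos x hx).le,
          intervalIntegral.integral_const_mul, integral_pow]
        simp [hF]
      · rw [indicator_of_notMem hx]
        have : (fun y => S.indicator (fun p : ℝ × ℝ => p.1 ^ k * p.2 ^ l) (x, y))
            = fun _ => (0:ℝ) := by
          funext y
          apply indicator_of_notMem
          intro hmem
          exact hx ⟨hmem.1, hmem.2.1⟩
        rw [this, integral_zero]
    · rw [← Measure.volume_eq_prod, integrable_indicator_iff hSm]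
      exact hf_int
  rw [fub, ← integral_Ioc_eq_integral_Ioo,
    ← Set.Ioc_union_Ioc_eq_Ioc ht0.le ht1.le]
  -- piecewise values of F
  have e1 : EqOn F (fun x => x ^ k * (1 / ((l:ℝ) + 1))) (Ioc (0:ℝ) t) := by
    rintro x ⟨hx0, hxt⟩
    have hxn : x ^ n ≤ h := htn ▸ pow_le_pow_left₀ hx0.le hxt n
    have hA1 : (1:ℝ) ≤ h / x ^ n := (one_le_div (by positivity)).mpr hxn
    have hcx : c x = 1 := min_eq_left (Real.one_le_rpow hA1 (by positivity))
    simp [hF, hcx]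
  have e2 : EqOn F (fun x => (h ^ β / ((l:ℝ) + 1)) * x⁻¹) (Ioc t 1) := by
    rintro x ⟨hxt, hx1⟩
    have hx0 : 0 < x := ht0.trans hxt
    have hxn : h < x ^ n := htn ▸ pow_lt_pow_left₀ hxt ht0.le hn.ne'
    have hA1 : h / x ^ n < 1 := (div_lt_one (by positivity)).mpr hxn
    have hcx : c x = (h / x ^ n) ^ ((m:ℝ)⁻¹) :=
      min_eq_right (Real.rpow_lt_one (by positivity) hA1 (by positivity)).le
    have hnb : (n:ℝ) * β = (k:ℝ) + 1 := by
      rw [hβ]; field_simp; linarith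
    have hexp : (m:ℝ)⁻¹ * ((l + 1 : ℕ) : ℝ) = β := by
      rw [hβ]; push_cast; ring
    have hxnb : (x ^ n) ^ β = x ^ ((k:ℝ) + 1) := by
      rw [← Real.rpow_natCast x n, ← Real.rpow_mul hx0.le, hnb]
    have hcp : c x ^ (l + 1) = h ^ β / x ^ ((k:ℝ) + 1) := by
      rw [hcx, ← Real.rpow_natCast ((h / x ^ n) ^ ((m:ℝ)⁻¹)) (l + 1),
        ← Real.rpow_mul (by positivity), hexp,
        Real.div_rpow hh0.le (by positivity), hxnb]
    have hxk : x ^ ((k:ℝ) + 1) = x ^ (k + 1 : ℕ) := by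
      rw [show ((k:ℝ) + 1) = ((k + 1 : ℕ) : ℝ) by push_cast; ring, Real.rpow_natCast]
    simp only [hF, hcp, hxk]
    rw [pow_succ]
    field_simp
  have i1 : IntegrableOn F (Ioc (0:ℝ) t) := by
    refine integrableOn_congr_fun e1 measurableSet_Ioc |>.mpr ?_
    exact (Continuous.integrableOn_Ioc (by continuity))
  have i2 : IntegrableOn F (Ioc t 1) := by
    refine integrableOn_congr_fun e2 measurableSet_Ioc |>.mpr ?_
    refine (intervalIntegrable_iff_integrableOn_Ioc_of_le ht1.le).mp ?_
    apply IntervalIntegrable.const_mul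
    apply intervalIntegral.intervalIntegrable_inv
    · intro x hx
      rcases hx with ⟨hx1, _⟩
      have : 0 < x := lt_of_lt_of_le (lt_min ht0 one_pos) hx1
      exact this.ne'
    · exact continuousOn_id
  rw [setIntegral_union (Set.Ioc_disjoint_Ioc_of_le le_rfl) measurableSet_Ioc i1 i2]
  clear_value β t c F S
  have v1 : (∫ x in Ioc (0:ℝ) t, F x) = h ^ β / (((k:ℝ) + 1) * ((l:ℝ) + 1)) := by
    rw [setIntegral_congr_fun measurableSet_Ioc e1,
      ← intervalIntegral.integral_of_le ht0.le,
      intervalIntegral.integral_mul_const, integral_pow]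
    have htk : t ^ (k + 1) = h ^ β := by
      rw [ht, ← Real.rpow_natCast (h ^ ((n:ℝ)⁻¹)) (k + 1), ← Real.rpow_mul hh0.le,
        ← hαβ]
      congr 1
      push_cast
      field_simp
    rw [htk]
    field_simp
    simp
  have v2 : (∫ x in Ioc t 1, F x)
      = (1 / (m * ((k:ℝ) + 1))) * h ^ β * Real.log (1 / h) := by
    rw [setIntegral_congr_fun measurableSet_Ioc e2,
      ← intervalIntegral.integral_of_le ht1.le,
      intervalIntegral.integral_const_mul]
    rw [integral_inv (by
      intro hx
      rcases hx with ⟨hx1, _⟩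
      have : 0 < (0:ℝ) := lt_of_lt_of_le (lt_min ht0 one_pos) hx1
      exact lt_irrefl _ this)]
    have hlt : Real.log (1 / t) = (n:ℝ)⁻¹ * Real.log (1 / h) := by
      rw [one_div, one_div, Real.log_inv, Real.log_inv, ht, Real.log_rpow hh0]
      ring
    have hcoef : ((l:ℝ) + 1) * (n:ℝ) = m * ((k:ℝ) + 1) := by linarith
    rw [hlt]
    have hinv : ((l:ℝ) + 1)⁻¹ * ((n:ℝ))⁻¹ = 1 / ((m:ℝ) * ((k:ℝ) + 1)) := by
      rw [← mul_inv, hcoef, one_div]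
    linear_combination (h ^ β * Real.log (1 / h)) * hinv
  rw [v1, v2, hαβ]
end
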